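/- arXiv:1510.04930 — 9 statements merged into one kernel-verified Lean document; each statement's English description precedes it below -/
import Mathlib

section
/- For every n×n matrix A over a field K and every permutation π of {1, …, n}, the matrix I − A_π is invertible and F_{π_n}(A)·F_{π_{n−1}}(A)⋯F_{π_1}(A) = (I − A_π)^{−1}·(A − A_π). -/
open Matrix

/-- `sdsF A i` is the matrix that agrees with the identity matrix in every row except
row `i`, whose `i`-th row equals the `i`-th row of `A`. -/
def sdsF {K : Type*} [Field K] {n : ℕ} (A : Matrix (Fin n) (Fin n) K) (i : Fin n) :
    Matrix (Fin n) (Fin n) K :=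
  Matrix.of fun k j => if k = i then A k j else if k = j then 1 else 0

/-- The map of the linear SDS with local matrix `A` and permutation update schedule `π`
(`π k` being the `k`-th index updated, zero-indexed): the product
`F_{π_n}(A) · F_{π_{n-1}}(A) ⋯ F_{π_1}(A)`. -/
def sdsMap {K : Type*} [Field K] {n : ℕ} (A : Matrix (Fin n) (Fin n) K)
    (π : Equiv.Perm (Fin n)) : Matrix (Fin n) (Fin n) K :=
  (((List.finRange n).reverse).map fun k => sdsF A (π k)).prod

/-- `permPart A π` is the matrix `A_π` with `[A_π]_{ij} = a_{ij}` if `i` appears strictly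
after `j` in `π` (i.e. `π⁻¹ i > π⁻¹ j`) and `0` otherwise. -/
def permPart {K : Type*} [Field K] {n : ℕ} (A : Matrix (Fin n) (Fin n) K)
    (π : Equiv.Perm (Fin n)) : Matrix (Fin n) (Fin n) K :=
  Matrix.of fun i j => if π.symm j < π.symm i then A i j else 0

section aux

variable {K : Type*} [Field K] {n : ℕ}

/-- Partial product: `F_{π_m}(A) ⋯ F_{π_1}(A)`. -/
def sdsPP (A : Matrix (Fin n) (Fin n) K) (π : Equiv.Perm (Fin n)) (m : ℕ) :
    Matrix (Fin n) (Fin n) K :=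
  (((List.finRange n).take m).reverse.map fun k => sdsF A (π k)).prod

lemma sdsPP_zero (A : Matrix (Fin n) (Fin n) K) (π : Equiv.Perm (Fin n)) :
    sdsPP A π 0 = 1 := rfl

lemma sdsPP_eq_sdsMap (A : Matrix (Fin n) (Fin n) K) (π : Equiv.Perm (Fin n))
    {m : ℕ} (hm : n ≤ m) : sdsPP A π m = sdsMap A π := by
  unfold sdsPP sdsMap
  rw [List.take_of_length_le (by simpa using hm)]

lemma sdsPP_succ (A : Matrix (Fin n) (Fin n) K) (π : Equiv.Perm (Fin n))
    {m : ℕ} (hm : m < n) :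
    sdsPP A π (m + 1) = sdsF A (π ⟨m, hm⟩) * sdsPP A π m := by
  unfold sdsPP
  rw [List.take_succ]
  have : (List.finRange n)[m]? = some ⟨m, hm⟩ := by
    rw [List.getElem?_eq_getElem (by simpa using hm)]
    simp
  simp [this]

lemma sdsF_mul_apply_ne (A : Matrix (Fin n) (Fin n) K) (t : Fin n)
    (P : Matrix (Fin n) (Fin n) K) {i : Fin n} (h : i ≠ t) (j : Fin n) :
    (sdsF A t * P) i j = P i j := by
  simp [Matrix.mul_apply, sdsF, h]

lemma sdsF_mul_apply_eq (A : Matrix (Fin n) (Fin n) K) (t : Fin n)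
    (P : Matrix (Fin n) (Fin n) K) (j : Fin n) :
    (sdsF A t * P) t j = ∑ k, A t k * P k j := by
  simp [Matrix.mul_apply, sdsF]

/-- Rows not yet updated are identity rows. -/
lemma sdsPP_not_updated (A : Matrix (Fin n) (Fin n) K) (π : Equiv.Perm (Fin n)) :
    ∀ m, ∀ i : Fin n, m ≤ (π.symm i : ℕ) → ∀ j,
      sdsPP A π m i j = (1 : Matrix (Fin n) (Fin n) K) i j := by
  intro m
  induction m with
  | zero => intro i _ j; rw [sdsPP_zero]
  | succ m ih =>
    intro i hi j
    have hm : m < n := lt_of_lt_of_le (Nat.lt_of_succ_le hi) (π.symm i).isLt.le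
    rw [sdsPP_succ A π hm]
    have hne : i ≠ π ⟨m, hm⟩ := by
      intro h
      have he : π.symm i = ⟨m, hm⟩ := by rw [h]; simp
      rw [he] at hi
      exact absurd hi (by simp)
    rw [sdsF_mul_apply_ne A _ _ hne, ih i (Nat.le_of_succ_le hi)]

/-- Updated rows are stable. -/
lemma sdsPP_stable (A : Matrix (Fin n) (Fin n) K) (π : Equiv.Perm (Fin n))
    {m : ℕ} {i : Fin n} (hi : (π.symm i : ℕ) < m) :
    ∀ m', m ≤ m' → ∀ j, sdsPP A π m' i j = sdsPP A π m i j := by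
  intro m' hm'
  induction m' , hm' using Nat.le_induction with
  | base => intro j; rfl
  | succ m' hm' ih =>
    intro j
    by_cases h : m' < n
    · rw [sdsPP_succ A π h]
      have hne : i ≠ π ⟨m', h⟩ := by
        intro he
        have he2 : π.symm i = ⟨m', h⟩ := by rw [he]; simp
        rw [he2] at hi
        simp only [] at hi
        omega
      rw [sdsF_mul_apply_ne A _ _ hne, ih]
    · have h1 : sdsPP A π (m' + 1) = sdsPP A π m' := by
        rw [sdsPP_eq_sdsMap A π (m := m' + 1) (by omega),
          sdsPP_eq_sdsMap A π (m := m') (by omega)]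
      rw [h1, ih]

lemma key_row (A : Matrix (Fin n) (Fin n) K) (π : Equiv.Perm (Fin n)) (i j : Fin n) :
    sdsMap A π i j =
      ∑ k, A i k * (if π.symm k < π.symm i then sdsMap A π k j
        else (1 : Matrix (Fin n) (Fin n) K) k j) := by
  set m : ℕ := (π.symm i : ℕ) with hm
  have hmn : m < n := (π.symm i).isLt
  have h1 : sdsMap A π i j = sdsPP A π (m + 1) i j := by
    rw [← sdsPP_eq_sdsMap A π (m := n) le_rfl]
    exact sdsPP_stable A π (Nat.lt_succ_self m) n hmn j
  have hi : π ⟨m, hmn⟩ = i := by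
    have : (⟨m, hmn⟩ : Fin n) = π.symm i := by ext; simp [hm]
    rw [this]; simp
  rw [h1, sdsPP_succ A π hmn, hi] at *
  rw [sdsF_mul_apply_eq]
  refine Finset.sum_congr rfl fun k _ => ?_
  by_cases hk : (π.symm k : ℕ) < m
  · rw [if_pos (by simpa [hm] using (Fin.lt_def.mpr hk)),
      ← sdsPP_eq_sdsMap A π (m := n) le_rfl,
      sdsPP_stable A π hk n hmn.le j]
  · rw [if_neg (fun hc => hk (by rw [hm]; exact Fin.lt_def.mp hc)),
      sdsPP_not_updated A π m k (le_of_not_gt hk) j]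

lemma key_eq (A : Matrix (Fin n) (Fin n) K) (π : Equiv.Perm (Fin n)) :
    (1 - permPart A π) * sdsMap A π = A - permPart A π := by
  ext i j
  rw [Matrix.sub_mul, Matrix.one_mul, Matrix.sub_apply, Matrix.sub_apply,
    Matrix.mul_apply, key_row A π i j]
  rw [← Finset.sum_sub_distrib]
  have : ∀ k ∈ Finset.univ, (A i k * (if π.symm k < π.symm i then sdsMap A π k j
        else (1 : Matrix (Fin n) (Fin n) K) k j)) - permPart A π i k * sdsMap A π k j
      = if π.symm k < π.symm i then 0 else A i k * (1 : Matrix (Fin n) (Fin n) K) k j := by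
    intro k _
    by_cases h : π.symm k < π.symm i <;> simp [permPart, h]
  rw [Finset.sum_congr rfl this, Finset.sum_ite, Finset.sum_const_zero, zero_add]
  by_cases h : π.symm j < π.symm i
  · rw [show (permPart A π i j) = A i j from by simp [permPart, h]]
    rw [sub_self]
    apply Finset.sum_eq_zero
    intro k hk
    simp only [Finset.mem_filter] at hk
    have : k ≠ j := fun he => hk.2 (he ▸ h)
    simp [Matrix.one_apply_ne this]
  · rw [show (permPart A π i j) = 0 from by simp [permPart, h], sub_zero]
    rw [Finset.sum_eq_single j]
    · simp
    · intro k hk hkj; simp [Matrix.one_apply_ne hkj]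
    · intro hj; exact absurd (Finset.mem_filter.mpr ⟨Finset.mem_univ j, h⟩) hj

lemma det_one_sub_permPart (A : Matrix (Fin n) (Fin n) K) (π : Equiv.Perm (Fin n)) :
    (1 - permPart A π).det = 1 := by
  have h := Matrix.det_submatrix_equiv_self (π : Fin n ≃ Fin n) (1 - permPart A π)
  rw [← h]
  have htri : ((1 - permPart A π).submatrix π π).BlockTriangular OrderDual.toDual := by
    intro k l hkl
    have hlk : k < l := hkl
    simp only [Matrix.submatrix_apply, Matrix.sub_apply, permPart, Matrix.of_apply]
    have h1 : (π k : Fin n) ≠ π l := fun he => (lt_irrefl k) (by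
      have := π.injective he; exact this ▸ hlk)
    have h2 : ¬ π.symm (π l) < π.symm (π k) := by
      simp only [Equiv.symm_apply_apply]
      exact not_lt.mpr hlk.le
    simp only [Matrix.one_apply_ne h1, zero_sub, neg_eq_zero, ite_eq_right_iff]
    intro hc
    simp only [Equiv.symm_apply_apply] at hc
    exact absurd hc (asymm hlk)
  rw [Matrix.det_of_lowerTriangular _ htri]
  apply Finset.prod_eq_one
  intro k _
  simp [permPart, Matrix.one_apply]

end aux

/-- **Theorem (closed formula for linear SDS over permutations).**
For every `n×n` matrix `A` over a field `K` and every permutation `π` of `{1, …, n}`,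
the matrix `I − A_π` is invertible and
`F_{π_n}(A) ⋯ F_{π_1}(A) = (I − A_π)⁻¹ · (A − A_π)`. -/
theorem linear_sds_closed_formula {K : Type*} [Field K] {n : ℕ} (hn : 0 < n)
    (A : Matrix (Fin n) (Fin n) K) (π : Equiv.Perm (Fin n)) :
    IsUnit (1 - permPart A π) ∧
      sdsMap A π = (1 - permPart A π)⁻¹ * (A - permPart A π) := by
  have hdet : IsUnit (1 - permPart A π).det := by
    rw [det_one_sub_permPart]; exact isUnit_one
  refine ⟨(Matrix.isUnit_iff_isUnit_det _).mpr hdet, ?_⟩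
  rw [← key_eq A π, ← Matrix.mul_assoc, Matrix.nonsing_inv_mul _ hdet, Matrix.one_mul]
end

section
/- Let A be an n×n matrix over a field K, π a permutation of {1, …, n}, and for each i let F̄_i(A) = F_i(A) − I (the matrix whose only possibly nonzero row is row i, equal to row i of A − I). Then for every 1 ≤ m ≤ n, the sum over all strictly decreasing index tuples n ≥ k_m > k_{m−1} > ⋯ > k_1 ≥ 1 of the products F̄_{π_{k_m}}(A)·F̄_{π_{k_{m−1}}}(A)⋯F̄_{π_{k_1}}(A) equals A_π^{m−1}·(A − I). -/
open Matrix Finset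

/-!
Write `E k` for the matrix unit at `(π k, π k)`. Then `F̄_{π k}(A) = E k * (A - 1)`, the `E k`
sum to `1`, and `∑_{l > k} E l * (A - 1) * E k = A_π * E k`: both sides are the column `π k` of
`A` restricted to the rows `π l` with `l > k`, where `A - 1` and `A` agree. Peeling off the
smallest index of a chain, induction on its length shows that the sum over the chains above `k`,
multiplied by `E k`, is `A_π ^ m * E k`; summing over the smallest index gives
`A_π ^ m * (A - 1)`.
-/

section ChainSums

variable {R ι : Type*}

lemma prod_map_reverse_finRange_cons [Monoid R] (B : ι → R) {m : ℕ} (k : ι)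
    (t : Fin m → ι) :
    ((List.finRange (m + 1)).reverse.map fun i => B ((Fin.cons k t : Fin (m + 1) → ι) i)).prod =
      ((List.finRange m).reverse.map fun i => B (t i)).prod * B k := by
  simp [List.finRange_succ, List.map_reverse, Function.comp_def]

lemma strictMono_cons_and_lt_iff [Preorder ι] {m : ℕ} (c : WithBot ι) (k : ι)
    (t : Fin m → ι) :
    (StrictMono (Fin.cons k t : Fin (m + 1) → ι) ∧
        ∀ i, c < (Fin.cons k t : Fin (m + 1) → ι) i) ↔
      c < k ∧ StrictMono t ∧ ∀ i, (k : WithBot ι) < t i := by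
  simp only [Fin.strictMono_cons, Fin.forall_fin_succ, Fin.cons_zero, Fin.cons_succ,
    WithBot.coe_lt_coe]
  constructor
  · rintro ⟨⟨hkt, ht⟩, hck, -⟩
    exact ⟨hck, ht, hkt⟩
  · rintro ⟨hck, ht, hkt⟩
    exact ⟨⟨hkt, ht⟩, hck, fun i => hck.trans (WithBot.coe_lt_coe.2 (hkt i))⟩

variable [Semiring R] [Fintype ι] [LinearOrder ι]

def chainProdSum (B : ι → R) (m : ℕ) (c : WithBot ι) : R :=
  ∑ t : Fin m → ι,
    if StrictMono t ∧ ∀ i, c < t i then ((List.finRange m).reverse.map fun i => B (t i)).prod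
    else 0

@[simp]
lemma chainProdSum_zero (B : ι → R) (c : WithBot ι) : chainProdSum B 0 c = 1 := by
  simp [chainProdSum, Subsingleton.strictMono]

lemma chainProdSum_succ (B : ι → R) (m : ℕ) (c : WithBot ι) :
    chainProdSum B (m + 1) c =
      ∑ k ∈ ({k : ι | c < k} : Finset ι), chainProdSum B m k * B k := by
  rw [chainProdSum, ← (Fin.consEquiv fun _ => ι).sum_comp, Fintype.sum_prod_type,
    Finset.sum_filter]
  refine Finset.sum_congr rfl fun k _ => ?_
  simp only [chainProdSum, Finset.sum_mul, ite_mul, zero_mul]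
  split_ifs with hck
  · refine Finset.sum_congr rfl fun t _ => ?_
    rw [show (Fin.consEquiv fun _ => ι) (k, t) = Fin.cons k t from rfl]
    simp only [strictMono_cons_and_lt_iff, prod_map_reverse_finRange_cons, hck, true_and]
  · refine Finset.sum_eq_zero fun t _ => ?_
    rw [show (Fin.consEquiv fun _ => ι) (k, t) = Fin.cons k t from rfl]
    simp only [strictMono_cons_and_lt_iff, hck, false_and, if_false]

variable {P : ι → R} {M N : R}

lemma chainProdSum_mul_eq_pow_mul (h : ∀ k, ∑ l with k < l, P l * M * P k = N * P k)
    (m : ℕ) (k : ι) : chainProdSum (fun l => P l * M) m k * P k = N ^ m * P k := by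
  induction m generalizing k with
  | zero => simp
  | succ m ih =>
    calc chainProdSum (fun l => P l * M) (m + 1) k * P k
        = ∑ l with k < l, chainProdSum (fun l => P l * M) m l * P l * M * P k := by
          simp only [chainProdSum_succ, WithBot.coe_lt_coe, Finset.sum_mul, mul_assoc]
      _ = ∑ l with k < l, N ^ m * (P l * M * P k) := by
          simp only [ih, mul_assoc]
      _ = N ^ (m + 1) * P k := by
          rw [← Finset.mul_sum, h, pow_succ, mul_assoc]

lemma chainProdSum_succ_bot_eq_pow_mul (h : ∀ k, ∑ l with k < l, P l * M * P k = N * P k)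
    (hP : ∑ k, P k = 1) (m : ℕ) : chainProdSum (fun l => P l * M) (m + 1) ⊥ = N ^ m * M := by
  calc chainProdSum (fun l => P l * M) (m + 1) ⊥
      = ∑ k : ι, chainProdSum (fun l => P l * M) m k * P k * M := by
        simp only [chainProdSum_succ, WithBot.bot_lt_coe, Finset.filter_true, mul_assoc]
    _ = N ^ m * M := by
        simp only [chainProdSum_mul_eq_pow_mul h, ← Finset.sum_mul, ← Finset.mul_sum, hP,
          mul_one]

end ChainSums

section Matrices

variable {K : Type*} [Field K] {n : ℕ}

lemma sdsF_sub_one (A : Matrix (Fin n) (Fin n) K) (i : Fin n) :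
    sdsF A i - 1 = single i i 1 * (A - 1) := by
  ext x y
  by_cases hx : x = i <;> simp [sdsF, one_apply, hx]

lemma sum_single_mul_sub_one_mul_single (A : Matrix (Fin n) (Fin n) K) (π : Equiv.Perm (Fin n))
    (k : Fin n) :
    ∑ l with k < l, single (π l) (π l) 1 * (A - 1) * single (π k) (π k) (1 : K) =
      permPart A π * single (π k) (π k) 1 := by
  ext x y
  rcases eq_or_ne y (π k) with rfl | hy
  · simp [Matrix.sum_apply, single_apply, permPart, ← Equiv.eq_symm_apply, one_apply]
    split_ifs with hkx hx
    · exact absurd (by simp [hx]) hkx.ne'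
    · rw [sub_zero]
    · rfl
  · simp [Matrix.sum_apply, hy, hy.symm]

end Matrices

theorem sds_bar_sum_eq_permPart_pow_general {K : Type*} [Field K] {n : ℕ}
    (A : Matrix (Fin n) (Fin n) K) (π : Equiv.Perm (Fin n))
    (m : ℕ) (hm₁ : 1 ≤ m) :
    (∑ t : Fin m → Fin n,
        if ∀ p q : Fin m, p < q → t p < t q then
          (((List.finRange m).reverse).map fun i => sdsF A (π (t i)) - 1).prod
        else 0) =
      permPart A π ^ (m - 1) * (A - 1) := by
  obtain ⟨m, rfl⟩ := Nat.exists_eq_add_of_le' hm₁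
  have hP : ∑ k, single (π k) (π k) (1 : K) = 1 :=
    (Equiv.sum_comp π fun i => single i i (1 : K)).trans sum_single_one
  rw [Nat.add_sub_cancel, ← chainProdSum_succ_bot_eq_pow_mul
    (sum_single_mul_sub_one_mul_single A π) hP]
  simp [chainProdSum, sdsF_sub_one, StrictMono]

/-- **Claims 1 and 2 of Theorem 1.**
With `F̄_i(A) = F_i(A) − I`, for every `1 ≤ m ≤ n` the sum over all strictly decreasing
tuples `n ≥ k_m > ⋯ > k_1 ≥ 1` of the products `F̄_{π_{k_m}}(A) ⋯ F̄_{π_{k_1}}(A)`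
equals `A_π^{m-1} · (A − I)`.  (Strictly decreasing tuples are encoded by strictly
increasing functions `t : Fin m → Fin n` listing `k_1 < ⋯ < k_m`; the product is taken
with the factor of largest index leftmost.) -/
theorem sds_bar_sum_eq_permPart_pow {K : Type*} [Field K] {n : ℕ} (hn : 0 < n)
    (A : Matrix (Fin n) (Fin n) K) (π : Equiv.Perm (Fin n))
    (m : ℕ) (hm₁ : 1 ≤ m) (hm₂ : m ≤ n) :
    (∑ t : Fin m → Fin n,
        if ∀ p q : Fin m, p < q → t p < t q then
          (((List.finRange m).reverse).map fun i => sdsF A (π (t i)) - 1).prod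
        else 0) =
      permPart A π ^ (m - 1) * (A - 1) :=
  sds_bar_sum_eq_permPart_pow_general A π m hm₁
end

section
/- Let K be a field, L a unit lower triangular n×n matrix over K (lower triangular with all diagonal entries equal to 1), and U an upper triangular n×n matrix over K. Set M = U + I − L^{−1}. Then F_n(M)·F_{n−1}(M)⋯F_1(M) = L·U; that is, the linear dynamical system with matrix L·U equals the map of the linear SDS with local matrix M and update schedule 1, 2, …, n. -/
open Matrix

/-- **LU-decompositions give linear SDS.**
Let `L` be unit lower triangular and `U` upper triangular over a field `K`, and set
`M = U + I − L⁻¹`. Then `F_n(M) · F_{n-1}(M) ⋯ F_1(M) = L · U`, i.e. the linear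
dynamical system with matrix `L · U` equals the map of the linear SDS with local matrix
`M` and the identity update schedule `1, 2, …, n`. -/
theorem lu_is_linear_sds {K : Type*} [Field K] {n : ℕ} (hn : 0 < n)
    (L U : Matrix (Fin n) (Fin n) K)
    (hL : ∀ i j : Fin n, i < j → L i j = 0)
    (hLdiag : ∀ i : Fin n, L i i = 1)
    (hU : ∀ i j : Fin n, j < i → U i j = 0) :
    sdsMap (U + 1 - L⁻¹) (Equiv.refl (Fin n)) = L * U := by
  classical
  set M := U + 1 - L⁻¹ with hMdef
  have hLbt : L.BlockTriangular OrderDual.toDual := fun i j h => hL i j h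
  have hdet : IsUnit L.det := by
    rw [Matrix.det_of_lowerTriangular L hLbt]
    simp [hLdiag]
  haveI : Invertible L := L.invertibleOfIsUnitDet hdet
  have hLinv : ∀ i j : Fin n, i < j → L⁻¹ i j = 0 :=
    fun i j h => blockTriangular_inv_of_blockTriangular hLbt h
  have hLinvdiag : ∀ i : Fin n, L⁻¹ i i = 1 := by
    intro i
    have h1 : (L⁻¹ * L) i i = 1 := by
      rw [Matrix.nonsing_inv_mul L hdet, Matrix.one_apply_eq]
    rw [Matrix.mul_apply, Finset.sum_eq_single i] at h1
    · rwa [hLdiag, mul_one] at h1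
    · intro b _ hb
      rcases lt_or_gt_of_ne hb with h | h
      · rw [hL b i h, mul_zero]
      · rw [hLinv i b h, zero_mul]
    · simp
  have hinvLU : L⁻¹ * (L * U) = U := by
    rw [← Matrix.mul_assoc, Matrix.nonsing_inv_mul L hdet, Matrix.one_mul]
  have main : ∀ m : ℕ, m ≤ n → ∀ i j : Fin n,
      ((((List.finRange n).take m).map (sdsF M)).reverse.prod) i j
        = if (i : ℕ) < m then (L * U) i j else if i = j then 1 else 0 := by
    intro m
    induction m with
    | zero =>
      intro _ i j
      simp [Matrix.one_apply]
    | succ m ih =>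
      intro hm i j
      have hm' : m < n := hm
      have htake : (List.finRange n).take (m + 1)
          = (List.finRange n).take m ++ [⟨m, hm'⟩] := by
        rw [List.take_succ]
        simp [List.getElem?_eq_getElem (by simpa using hm' : m < (List.finRange n).length)]
      set P := (((List.finRange n).take m).map (sdsF M)).reverse.prod with hP
      have ih' := ih (le_of_lt hm')
      rw [htake, List.map_append, List.reverse_append]
      simp only [List.map_cons, List.map_nil, List.reverse_cons, List.reverse_nil,
        List.nil_append, List.prod_cons]
      rw [List.singleton_append, List.prod_cons, ← hP, Matrix.mul_apply]
      by_cases hi : i = ⟨m, hm'⟩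
      · subst hi
        have hrow : ∀ k, sdsF M ⟨m, hm'⟩ ⟨m, hm'⟩ k = M ⟨m, hm'⟩ k := by
          intro k; simp [sdsF]
        set i := (⟨m, hm'⟩ : Fin n) with hidef
        have key : ∀ k : Fin n, M i k * P k j
            = (U i k * (if k = j then (1 : K) else 0)
                + (if i = k then (1 : K) else 0) * (if i = j then 1 else 0))
              - (L⁻¹ i k * (L * U) k j
                - (if i = k then (1 : K) else 0) * ((L * U) i j)
                + (if i = k then (1 : K) else 0) * (if i = j then (1 : K) else 0)) := by
          intro k
          have hMik : M i k = U i k + (if i = k then 1 else 0) - L⁻¹ i k := by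
            simp [hMdef, Matrix.sub_apply, Matrix.add_apply, Matrix.one_apply]
          rw [hMik, ih' k j]
          by_cases hk : (k : ℕ) < m
          · have hki : k < i := by
              rw [Fin.lt_def]; simpa [hidef] using hk
            have hUik : U i k = 0 := hU i k hki
            have hik : i ≠ k := fun h => absurd (h ▸ hki) (lt_irrefl _)
            simp only [if_pos hk, hUik, if_neg hik]
            ring
          · by_cases hik : i = k
            · have hkm : ¬ ((k : ℕ) < m) := hk
              subst hik
              simp only [if_neg hkm, hLinvdiag, eq_self_iff_true, if_true]
              ring
            · have hik' : i < k := by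
                rw [Fin.lt_def]
                have : (i : ℕ) ≠ (k : ℕ) := fun h => hik (Fin.ext h)
                simp only [hidef] at this ⊢
                omega
              simp only [if_neg hk, hLinv i k hik', if_neg hik]
              ring
        simp only [hrow]
        rw [Finset.sum_congr rfl fun k _ => key k]
        rw [Finset.sum_sub_distrib, Finset.sum_add_distrib, Finset.sum_add_distrib,
          Finset.sum_sub_distrib]
        have h1 : ∑ k : Fin n, U i k * (if k = j then (1 : K) else 0) = U i j := by
          simp [mul_ite, mul_one, mul_zero, Finset.sum_ite_eq']
        have h2 : ∀ c : K, ∑ k : Fin n, (if i = k then (1 : K) else 0) * c = c := by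
          intro c
          simp [ite_mul, one_mul, zero_mul, Finset.sum_ite_eq]
        have h3 : ∑ k : Fin n, L⁻¹ i k * (L * U) k j = U i j := by
          rw [← Matrix.mul_apply, hinvLU]
        rw [h1, h2, h2, h3]
        have : ((i : ℕ) < m + 1) := by simp [hidef]
        rw [if_pos this]
        ring
      · have hrow : ∀ k, sdsF M ⟨m, hm'⟩ i k = if i = k then (1 : K) else 0 := by
          intro k; simp [sdsF, hi]
        simp only [hrow, ite_mul, one_mul, zero_mul, Finset.sum_ite_eq, Finset.mem_univ,
          if_true]
        rw [ih' i j]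
        have hne : (i : ℕ) ≠ m := fun h => hi (Fin.ext h)
        have : ((i : ℕ) < m + 1) = ((i : ℕ) < m) := propext (by omega)
        simp only [this]
  have hfin : (List.finRange n).take n = List.finRange n := by
    simp
  have : sdsMap M (Equiv.refl (Fin n))
      = (((List.finRange n).take n).map (sdsF M)).reverse.prod := by
    rw [sdsMap, hfin]
    simp [List.map_reverse]
  rw [this]
  ext i j
  rw [main n le_rfl i j, if_pos i.isLt]
end

section
/- Let (P, ≤) be a finite poset with elements s_1, …, s_n, K a field, and H an n×n matrix over K belonging to the incidence algebra of P with H_{ii} = 1 for all i. Set A = 2I − H (so A_{ii} = 1 and A_{ij} = −H_{ij} for i ≠ j). Let π = π_1π_2⋯π_n be a permutation of {1, …, n} such that its reversal π_n π_{n−1} ⋯ π_1 is a linear extension of P; equivalently, whenever s_i < s_j in P, the index i appears strictly after j in π. Then H is invertible and F_{π_n}(A)·F_{π_{n−1}}(A)⋯F_{π_1}(A) = H^{−1}; that is, H^{−1} is the map of a linear SDS. -/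
open Matrix

/-! Updating the vertices in the order of `π` replaces the rows of `H`, one at a time, by the
rows of the identity. When row `c` is updated, every `k ≠ c` with `H c k ≠ 0` satisfies
`s_c < s_k` and has therefore been updated already, so row `c` of `(2 - H) * N` only sees the
identity rows `e_k` and its own row `H c`; the off-diagonal part of `H c` cancels and `e_c` is
left. After the whole schedule, `sdsMap (2 - H) π * H = 1`. -/

theorem Matrix.two_sub_mul_row_eq_one_row {ι R : Type*} [Fintype ι] [DecidableEq ι] [Ring R]
    {H N : Matrix ι ι R} {c : ι} (hHc : H c c = 1) (hNc : N c = H c)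
    (hN : ∀ k, k ≠ c → H c k ≠ 0 → N k = (1 : Matrix ι ι R) k) :
    ((2 - H) * N) c = (1 : Matrix ι ι R) c := by
  have hzero : ((H - 1) * (N - 1)) c = 0 := by
    ext j
    refine Finset.sum_eq_zero fun k _ => ?_
    by_cases hkc : k = c
    · simp [hkc, hHc]
    by_cases hck : H c k = 0
    · simp [one_apply_ne' hkc, hck]
    · simp [hN k hkc hck]
  have hsplit : (2 - H) * N = N - (H - 1) * (N - 1) - (H - 1) := by noncomm_ring
  ext j
  rw [hsplit, sub_apply, sub_apply, sub_apply, congrFun hzero j, congrFun hNc j]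
  simp

section SDS

variable {K : Type*} [Field K] {n : ℕ}

theorem sdsF_mul_row (A M : Matrix (Fin n) (Fin n) K) (c i : Fin n) :
    (sdsF A c * M) i = if i = c then (A * M) c else M i := by
  ext j
  by_cases h : i = c <;> simp [sdsF, h, mul_apply]

/-- The first letter of `l` is updated first. -/
def sdsWordMap (A : Matrix (Fin n) (Fin n) K) (l : List (Fin n)) : Matrix (Fin n) (Fin n) K :=
  (l.reverse.map (sdsF A)).prod

theorem sdsWordMap_append_singleton (A : Matrix (Fin n) (Fin n) K) (l : List (Fin n))
    (c : Fin n) : sdsWordMap A (l ++ [c]) = sdsF A c * sdsWordMap A l := by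
  simp [sdsWordMap]

theorem sdsMap_eq_sdsWordMap (A : Matrix (Fin n) (Fin n) K) (π : Equiv.Perm (Fin n)) :
    sdsMap A π = sdsWordMap A ((List.finRange n).map π) := by
  simp [sdsMap, sdsWordMap, List.map_reverse, Function.comp_def]

theorem sdsWordMap_two_sub_mul_row {H : Matrix (Fin n) (Fin n) K} (hH1 : ∀ i, H i i = 1)
    {l : List (Fin n)} (hl : l.Pairwise fun a b => a ≠ b ∧ H a b = 0)
    (hclosed : ∀ c ∈ l, ∀ k, k ≠ c → H c k ≠ 0 → k ∈ l) (i : Fin n) :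
    (sdsWordMap (2 - H) l * H : Matrix (Fin n) (Fin n) K) i =
      if i ∈ l then (1 : Matrix (Fin n) (Fin n) K) i else H i := by
  induction l using List.reverseRecOn generalizing i with
  | nil => simp [sdsWordMap]
  | append_singleton l c ih =>
    rw [List.pairwise_append] at hl
    obtain ⟨hl, -, hlc⟩ := hl
    have hlc' : ∀ a ∈ l, a ≠ c ∧ H a c = 0 := fun a ha => hlc a ha c (List.mem_singleton_self c)
    have hpred : ∀ a ∈ l ++ [c], ∀ k, k ≠ a → H a k ≠ 0 → k ≠ c → k ∈ l := by
      intro a ha k hka hak hkc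
      simpa [hkc] using hclosed a ha k hka hak
    have ih := ih hl fun a ha k hka hak =>
      hpred a (by simp [ha]) k hka hak fun hkc => hak (hkc ▸ (hlc' a ha).2)
    rw [sdsWordMap_append_singleton, Matrix.mul_assoc, sdsF_mul_row]
    by_cases hic : i = c
    · subst hic
      have hi : i ∉ l := fun h => (hlc' i h).1 rfl
      rw [if_pos rfl, if_pos (List.mem_append_right _ (List.mem_singleton_self i))]
      refine two_sub_mul_row_eq_one_row (hH1 i) (by rw [ih i, if_neg hi]) fun k hki hik => ?_
      rw [ih k, if_pos (hpred i (by simp) k hki hik hki)]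
    · simp [ih, hic]

end SDS

theorem moebius_inverse_as_linear_sds_general {K : Type*} [Field K] {n : ℕ}
    (r : Fin n → Fin n → Prop)
    (H : Matrix (Fin n) (Fin n) K)
    (hH0 : ∀ i j : Fin n, ¬ r i j → H i j = 0)
    (hH1 : ∀ i : Fin n, H i i = 1)
    (π : Equiv.Perm (Fin n))
    (hπ : ∀ i j : Fin n, r i j → i ≠ j → π.symm j < π.symm i) :
    IsUnit H ∧ sdsMap ((2 : Matrix (Fin n) (Fin n) K) - H) π = H⁻¹ := by
  have hschedule : ((List.finRange n).map π).Pairwise fun a b => a ≠ b ∧ H a b = 0 := by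
    refine List.pairwise_map.mpr ((List.pairwise_lt_finRange n).imp fun {a b} hab => ?_)
    refine ⟨π.injective.ne hab.ne, by_contra fun hH => ?_⟩
    have := hπ _ _ (not_not.mp fun hr => hH (hH0 _ _ hr)) (π.injective.ne hab.ne)
    simp only [Equiv.symm_apply_apply] at this
    exact absurd hab this.asymm
  have hall : ∀ k, k ∈ (List.finRange n).map π := fun k =>
    List.mem_map.mpr ⟨π.symm k, List.mem_finRange _, π.apply_symm_apply k⟩
  have hmul : sdsMap (2 - H) π * H = 1 := by
    ext i : 1
    rw [sdsMap_eq_sdsWordMap, sdsWordMap_two_sub_mul_row hH1 hschedule (fun _ _ k _ _ => hall k),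
      if_pos (hall i)]
  exact ⟨(isUnit_iff_isUnit_det H).mpr (isUnit_det_of_left_inverse hmul),
    (inv_eq_left_inv hmul).symm⟩

/-- **Proposition (Moebius-type inverses via linear SDS).**
Let `r` be a partial order on `{1, …, n}` and `H` a matrix in its incidence algebra
(`H i j = 0` unless `r i j`) with unit diagonal. Set `A = 2I − H`, so `A i i = 1` and
`A i j = −H i j` for `i ≠ j`. If `π` is a permutation whose reversal is a linear
extension of the poset — i.e. whenever `r i j` and `i ≠ j`, the index `i` appears
strictly after `j` in `π` — then `H` is invertible and
`F_{π_n}(A) ⋯ F_{π_1}(A) = H⁻¹`. -/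
theorem moebius_inverse_as_linear_sds {K : Type*} [Field K] {n : ℕ} (hn : 0 < n)
    (r : Fin n → Fin n → Prop) (hr : IsPartialOrder (Fin n) r)
    (H : Matrix (Fin n) (Fin n) K)
    (hH0 : ∀ i j : Fin n, ¬ r i j → H i j = 0)
    (hH1 : ∀ i : Fin n, H i i = 1)
    (π : Equiv.Perm (Fin n))
    (hπ : ∀ i j : Fin n, r i j → i ≠ j → π.symm j < π.symm i) :
    IsUnit H ∧ sdsMap ((2 : Matrix (Fin n) (Fin n) K) - H) π = H⁻¹ :=
  moebius_inverse_as_linear_sds_general r H hH0 hH1 π hπ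
end

section
/- Let K be a field, A an n×n matrix over K, and w = w_1 w_2 ⋯ w_m a word over {1, …, n} in which every index of {1, …, n} appears at least once. Define the m×m matrix C, with rows and columns indexed by the positions 1, …, m of the word, by C_{pq} = (A − I)_{w_p, w_q} if p > q and C_{pq} = 0 otherwise. Then I − C is invertible and F_{w_m}(A)·F_{w_{m−1}}(A)⋯F_{w_1}(A) = I + ^c((I − C)^{−1})·(A − I), where for an m×m matrix M the compression ^c(M) is the n×n matrix with (i,k)-entry [^c(M)]_{ik} = Σ_{p : w_p = i} Σ_{q : w_q = k} M_{pq}. -/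
open Matrix Finset

/-- The map of the linear SDS with local matrix `A` and word update schedule
`w = w₁ w₂ ⋯ w_m` (`w₁` updated first): the product `F_{w_m}(A) ⋯ F_{w_1}(A)`. -/
def wordMap {K : Type*} [Field K] {n m : ℕ} (A : Matrix (Fin n) (Fin n) K)
    (w : Fin m → Fin n) : Matrix (Fin n) (Fin n) K :=
  (((List.finRange m).reverse).map fun p => sdsF A (w p)).prod

/-- The `m×m` matrix `C` indexed by the positions of the word `w`, with
`C p q = (A − I) (w p) (w q)` if `p > q` and `0` otherwise. -/
def wordC {K : Type*} [Field K] {n m : ℕ} (A : Matrix (Fin n) (Fin n) K)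
    (w : Fin m → Fin n) : Matrix (Fin m) (Fin m) K :=
  Matrix.of fun p q => if q < p then (A - 1) (w p) (w q) else 0

/-- Block-compression with respect to the word `w`: for an `m×m` matrix `M`,
`[^c(M)]_{ik} = Σ_{p : w p = i} Σ_{q : w q = k} M p q`. -/
def wordComp {K : Type*} [Field K] {n m : ℕ} (w : Fin m → Fin n)
    (M : Matrix (Fin m) (Fin m) K) : Matrix (Fin n) (Fin n) K :=
  Matrix.of fun i k => ∑ p : Fin m, ∑ q : Fin m, if w p = i ∧ w q = k then M p q else 0

/-!
Left multiplication by `F_i(A) = 1 + E_{ii} (A - 1)` changes only row `i` of a matrix `P`, adding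
row `i` of `(A - 1) P` to it. Hence the product telescopes to `1 + Σ_p e_{w_p} x_p`, where
`x_p` is the row added by the `p`-th update. Inserting the telescoped form of the partial product
into `x_p` gives `x_p = (A - 1)_{w_p} + Σ_{q < p} (A - 1)_{w_p w_q} x_q`, i.e.
`(1 - C) X = (A - 1)[w, :]`.
Since `C` is strictly lower triangular, `1 - C` is unipotent, so `X = (1 - C)⁻¹ (A - 1)[w, :]`, and
`Σ_p e_{w_p} x_p` is exactly the compression of `(1 - C)⁻¹` times `A - 1`.
-/

theorem Matrix.det_one_sub_eq_one_of_strictLowerTriangular {ι R : Type*} [CommRing R]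
    [Fintype ι] [DecidableEq ι] [LinearOrder ι] (C : Matrix ι ι R)
    (hC : ∀ ⦃p q⦄, p ≤ q → C p q = 0) :
    (1 - C).det = 1 := by
  rw [det_of_isLowerTriangular]
  · exact prod_eq_one fun p _ => by simp [hC le_rfl]
  · intro p q hpq
    have hpq : p < q := hpq
    simp [hC hpq.le, hpq.ne]

theorem Matrix.eq_nonsing_inv_mul_iff {ι κ R : Type*} [CommRing R] [Fintype ι] [DecidableEq ι]
    {A : Matrix ι ι R} (hA : IsUnit A.det) {B C : Matrix ι κ R} :
    C = A⁻¹ * B ↔ A * C = B := by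
  constructor
  · rintro rfl
    exact mul_nonsing_inv_cancel_left A B hA
  · rintro rfl
    exact (nonsing_inv_mul_cancel_left A C hA).symm

section LinearSDS

variable {K : Type*} [Field K] {n m : ℕ}

theorem sdsF_mul_apply (A : Matrix (Fin n) (Fin n) K) (i : Fin n) {ι : Type*}
    (M : Matrix (Fin n) ι K) (r : Fin n) (c : ι) :
    (sdsF A i * M) r c =
      M r c + if r = i then ((A - 1) * M : Matrix (Fin n) ι K) i c else 0 := by
  by_cases hr : r = i
  · subst hr
    simp [sdsF, mul_apply, sub_mul, Matrix.sub_apply, one_apply]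
  · simp [sdsF, mul_apply, hr]

theorem wordMap_succ (A : Matrix (Fin n) (Fin n) K) (w : Fin (m + 1) → Fin n) :
    wordMap A w = sdsF A (w (Fin.last m)) * wordMap A (Fin.init w) := by
  simp [wordMap, List.finRange_succ_last, Fin.init, Function.comp_def]

theorem det_one_sub_wordC (A : Matrix (Fin n) (Fin n) K) (w : Fin m → Fin n) :
    (1 - wordC A w).det = 1 :=
  det_one_sub_eq_one_of_strictLowerTriangular _ fun p q hpq => by simp [wordC, not_lt.2 hpq]

theorem isUnit_det_one_sub_wordC (A : Matrix (Fin n) (Fin n) K) (w : Fin m → Fin n) :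
    IsUnit (1 - wordC A w).det :=
  det_one_sub_wordC A w ▸ isUnit_one

/-- Row `p` is the row that the `p`-th update adds to row `w p`, namely row `w p` of
`(A - 1) F_{w_{p-1}} ⋯ F_{w_1}`. -/
noncomputable def wordIncrements (A : Matrix (Fin n) (Fin n) K) (w : Fin m → Fin n) :
    Matrix (Fin m) (Fin n) K :=
  (1 - wordC A w)⁻¹ * (A - 1).submatrix w id

theorem eq_wordIncrements_iff {A : Matrix (Fin n) (Fin n) K} {w : Fin m → Fin n}
    {X : Matrix (Fin m) (Fin n) K} :
    X = wordIncrements A w ↔ X = (A - 1).submatrix w id + wordC A w * X := by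
  rw [wordIncrements, eq_nonsing_inv_mul_iff (isUnit_det_one_sub_wordC A w), Matrix.sub_mul,
    Matrix.one_mul, sub_eq_iff_eq_add]

theorem wordIncrements_apply (A : Matrix (Fin n) (Fin n) K) (w : Fin m → Fin n) (p : Fin m)
    (c : Fin n) :
    wordIncrements A w p c = (A - 1) (w p) c + ∑ q, wordC A w p q * wordIncrements A w q c :=
  congr_fun₂ (eq_wordIncrements_iff.mp rfl) p c

theorem wordIncrements_init (A : Matrix (Fin n) (Fin n) K) (w : Fin (m + 1) → Fin n) :
    wordIncrements A (Fin.init w) = (wordIncrements A w).submatrix Fin.castSucc id := by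
  refine (eq_wordIncrements_iff.mpr ?_).symm
  ext p c
  simp [wordIncrements_apply A w p.castSucc c, mul_apply, Fin.sum_univ_castSucc, wordC, Fin.init,
    (Fin.castSucc_lt_last p).asymm]

theorem wordIncrements_last (A : Matrix (Fin n) (Fin n) K) (w : Fin (m + 1) → Fin n)
    (c : Fin n) :
    wordIncrements A w (Fin.last m) c = (A - 1) (w (Fin.last m)) c +
      ∑ q : Fin m, (A - 1) (w (Fin.last m)) (w q.castSucc) * wordIncrements A (Fin.init w) q c := by
  simp [wordIncrements_apply A w (Fin.last m) c, Fin.sum_univ_castSucc, wordC, wordIncrements_init]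

theorem wordMap_eq_one_add_mul_wordIncrements (A : Matrix (Fin n) (Fin n) K)
    (w : Fin m → Fin n) :
    wordMap A w = 1 + (1 : Matrix (Fin n) (Fin n) K).submatrix id w * wordIncrements A w := by
  induction m with
  | zero => simp [wordMap]
  | succ m ih =>
    set W' := (1 : Matrix (Fin n) (Fin n) K).submatrix id (Fin.init w)
    have hlast : ((A - 1) * (1 + W' * wordIncrements A (Fin.init w)) : Matrix (Fin n) (Fin n) K)
        (w (Fin.last m)) = wordIncrements A w (Fin.last m) := by
      ext c
      have hW : (A - 1) * W' = (A - 1).submatrix id (Fin.init w) :=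
        mul_submatrix_one (Equiv.refl _) _ _
      rw [mul_add, Matrix.mul_one, ← Matrix.mul_assoc, hW, wordIncrements_last]
      simp [mul_apply, Fin.init]
    ext r c
    rw [wordMap_succ, sdsF_mul_apply, ih, hlast]
    simp only [wordIncrements_init, Matrix.add_apply, mul_apply, Fin.sum_univ_castSucc,
      submatrix_apply, id_eq, one_apply, boole_mul, add_assoc]
    rfl

theorem wordComp_eq_mul_mul (w : Fin m → Fin n) (M : Matrix (Fin m) (Fin m) K) :
    wordComp w M = (1 : Matrix (Fin n) (Fin n) K).submatrix id w * M *
      (1 : Matrix (Fin n) (Fin n) K).submatrix w id := by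
  ext i k
  simp only [wordComp, mul_apply, of_apply, submatrix_apply, sum_mul]
  simp only [one_apply, boole_mul, mul_boole, ite_and]
  rw [sum_comm]
  simp only [id, @eq_comm _ (w _), ← ite_and, and_comm]

end LinearSDS

theorem linear_sds_word_closed_formula_general {K : Type*} [Field K] {n m : ℕ}
    (A : Matrix (Fin n) (Fin n) K) (w : Fin m → Fin n) :
    IsUnit (1 - wordC A w) ∧
      wordMap A w = 1 + wordComp w ((1 - wordC A w)⁻¹) * (A - 1) := by
  refine ⟨(isUnit_iff_isUnit_det _).2 (isUnit_det_one_sub_wordC A w), ?_⟩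
  have hrows :
      (A - 1).submatrix w id = (1 : Matrix (Fin n) (Fin n) K).submatrix w id * (A - 1) :=
    (one_submatrix_mul w (Equiv.refl _) _).symm
  rw [wordMap_eq_one_add_mul_wordIncrements, wordIncrements, wordComp_eq_mul_mul, hrows]
  simp only [Matrix.mul_assoc]

/-- **Theorem (closed formula for linear SDS over words).**
Let `w = w₁ ⋯ w_m` be a word over `{1, …, n}` containing every index at least once.
Then `I − C` is invertible and
`F_{w_m}(A) ⋯ F_{w_1}(A) = I + ^c((I − C)⁻¹) · (A − I)`. -/
theorem linear_sds_word_closed_formula {K : Type*} [Field K] {n m : ℕ}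
    (A : Matrix (Fin n) (Fin n) K) (w : Fin m → Fin n)
    (hw : Function.Surjective w) :
    IsUnit (1 - wordC A w) ∧
      wordMap A w = 1 + wordComp w ((1 - wordC A w)⁻¹) * (A - 1) :=
  linear_sds_word_closed_formula_general A w
end

section
/- Let K be a field, A an n×n matrix over K, and w = w_1 w_2 ⋯ w_m a word over {1, …, n} in which every index of {1, …, n} appears at least once. Let C be the m×m matrix with C_{pq} = (A − I)_{w_p, w_q} if p > q and C_{pq} = 0 otherwise, and let ^c denote compression with respect to w: for an m×m matrix M, [^c(M)]_{ik} = Σ_{p : w_p = i} Σ_{q : w_q = k} M_{pq}. Then F_{w_m}(A)·F_{w_{m−1}}(A)⋯F_{w_1}(A) = I + Σ_{l=0}^{m−1} ^c(C^l)·(A − I), where C^0 = I. -/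
open Matrix Finset

/-!
Write `B = A - 1`. Each factor is a rank-one update `F_i(A) = 1 + e_i B_i` of the identity, where
`B_i` is the `i`-th row of `B`. For arbitrary columns `u_p` and rows `v_p`, the product
`(1 + u_m v_m) ⋯ (1 + u_1 v_1)` equals `1 + Σ_p u_p y_p`, where the rows `y_p` solve the triangular
system `y_p = v_p + Σ_{q < p} (v_p u_q) y_q`: multiplying the product of the first `p - 1` factors
by `1 + u_p v_p` adds exactly `u_p y_p`. In matrix form the system reads `Y = V + C Y` with `C` the
strictly lower triangular part of `V U`; as `C` is nilpotent, it is solved by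
`Y = (Σ_{l<m} C^l) V`. For `u_p = e_{w_p}` and `v_p = B_{w_p}` this `C` is the matrix `C` of the
theorem, and `U M V = ^c(M) B`.
-/

theorem geom_sum_eq_one_add_mul_geom_sum {R : Type*} [Ring R] {x : R} {m : ℕ} (h : x ^ m = 0) :
    ∑ l ∈ range m, x ^ l = 1 + x * ∑ l ∈ range m, x ^ l := by
  have h' := mul_neg_geom_sum x m
  rwa [h, sub_zero, sub_mul, one_mul, sub_eq_iff_eq_add] at h'

section StrictLowerPart

variable {α : Type*} {m : ℕ}

def strictLowerPart [Zero α] (M : Matrix (Fin m) (Fin m) α) : Matrix (Fin m) (Fin m) α :=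
  of fun p q => if q < p then M p q else 0

variable [Semiring α]

theorem strictLowerPart_pow_apply_eq_zero (M : Matrix (Fin m) (Fin m) α) {l : ℕ} {p q : Fin m}
    (h : (p : ℕ) < l + q) : (strictLowerPart M ^ l) p q = 0 := by
  induction l generalizing p with
  | zero => exact one_apply_ne (by rintro rfl; omega)
  | succ l ih =>
    rw [pow_succ', mul_apply]
    refine sum_eq_zero fun r _ => ?_
    by_cases hr : r < p
    · rw [ih (by rw [Fin.lt_def] at hr; omega), mul_zero]
    · simp [strictLowerPart, hr]

theorem strictLowerPart_pow_card (M : Matrix (Fin m) (Fin m) α) : strictLowerPart M ^ m = 0 := by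
  ext p q
  exact strictLowerPart_pow_apply_eq_zero M (by omega)

end StrictLowerPart

section RankOneUpdates

variable {ι R : Type*} [Ring R]

theorem mul_eq_submatrix_castSucc_mul_add_vecMulVec_last {m : ℕ} (U : Matrix ι (Fin (m + 1)) R)
    (Y : Matrix (Fin (m + 1)) ι R) :
    U * Y = U.submatrix id Fin.castSucc * Y.submatrix Fin.castSucc id
      + vecMulVec (Uᵀ (Fin.last m)) (Y (Fin.last m)) := by
  ext i k
  simp [mul_apply, Fin.sum_univ_castSucc, vecMulVec_apply]

variable [Fintype ι] [DecidableEq ι]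

theorem prod_one_add_vecMulVec_of_eq {m : ℕ} (U : Matrix ι (Fin m) R) (V Y : Matrix (Fin m) ι R)
    (hY : Y = V + strictLowerPart (V * U) * Y) :
    ((List.finRange m).reverse.map fun p => 1 + vecMulVec (Uᵀ p) (V p)).prod = 1 + U * Y := by
  induction m with
  | zero => simp
  | succ m ih =>
    set U' := U.submatrix id Fin.castSucc
    set V' := V.submatrix Fin.castSucc id
    set Y' := Y.submatrix Fin.castSucc id
    have hY' : Y' = V' + strictLowerPart (V' * U') * Y' := by
      ext p k
      have := congrFun (congrFun hY p.castSucc) k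
      simpa [Y', V', U', mul_apply, Fin.sum_univ_castSucc, strictLowerPart,
        (Fin.castSucc_lt_last p).asymm] using this
    have hlast : Y (Fin.last m) = V (Fin.last m) + V (Fin.last m) ᵥ* (U' * Y') := by
      ext k
      rw [congrFun (congrFun hY (Fin.last m)) k]
      simp only [strictLowerPart, mul_apply, Matrix.add_apply, of_apply, ite_mul, sum_mul,
        mul_assoc, zero_mul, Fin.sum_univ_castSucc, Fin.castSucc_lt_last, ↓reduceIte,
        lt_self_iff_false, add_zero, Pi.add_apply, vecMul, dotProduct, submatrix_apply, id_eq,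
        mul_sum, add_right_inj, U', Y']
      exact sum_comm
    have hprefix : ((List.finRange m).reverse.map
        fun p => 1 + vecMulVec (Uᵀ p.castSucc) (V p.castSucc)).prod = 1 + U' * Y' :=
      ih U' V' Y' hY'
    simp only [List.finRange_succ_last, List.reverse_append, List.reverse_cons, List.reverse_nil,
      List.nil_append, List.cons_append, List.map_cons, List.map_reverse, List.map_map,
      Function.comp_def, List.prod_cons]
    rw [← List.map_reverse, hprefix, mul_eq_submatrix_castSucc_mul_add_vecMulVec_last U Y, hlast,
      vecMulVec_add, add_mul, one_mul, mul_add, mul_one, vecMulVec_mul]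
    abel

theorem prod_one_add_vecMulVec {m : ℕ} (U : Matrix ι (Fin m) R) (V : Matrix (Fin m) ι R) :
    ((List.finRange m).reverse.map fun p => 1 + vecMulVec (Uᵀ p) (V p)).prod
      = 1 + U * (∑ l ∈ range m, strictLowerPart (V * U) ^ l) * V := by
  rw [Matrix.mul_assoc]
  refine prod_one_add_vecMulVec_of_eq U V _ ?_
  conv_lhs => rw [geom_sum_eq_one_add_mul_geom_sum (strictLowerPart_pow_card _)]
  rw [Matrix.add_mul, Matrix.one_mul, Matrix.mul_assoc]

end RankOneUpdates

/-- Its `p`-th column is `e_{w p}`; it is written as a transpose so that the `p`-th row of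
`(wordPlacement R w)ᵀ` is definitionally the row `w p` of the identity. -/
def wordPlacement (R : Type*) [Zero R] [One R] {n m : ℕ} (w : Fin m → Fin n) :
    Matrix (Fin n) (Fin m) R :=
  ((1 : Matrix (Fin n) (Fin n) R).submatrix w id)ᵀ

theorem mul_wordPlacement {R : Type*} [NonAssocSemiring R] {n m : ℕ} (w : Fin m → Fin n)
    (B : Matrix (Fin m) (Fin n) R) : B * wordPlacement R w = B.submatrix id w := by
  simpa [wordPlacement] using mul_submatrix_one (Equiv.refl _) w B

section WordSDS

variable {K : Type*} [Field K] {n m : ℕ}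

theorem wordComp_mul (w : Fin m → Fin n) (M : Matrix (Fin m) (Fin m) K)
    (B : Matrix (Fin n) (Fin n) K) :
    wordComp w M * B = wordPlacement K w * M * B.submatrix w id := by
  ext i k
  simp only [wordComp, wordPlacement, of_apply, mul_apply, transpose_apply, submatrix_apply,
    one_apply, id, ite_mul, one_mul, zero_mul, sum_mul, ite_and, sum_ite_irrel, sum_const_zero,
    sum_comm (γ := Fin n), sum_ite_eq, mem_univ, ↓reduceIte]
  rw [sum_comm]
  exact sum_congr rfl fun p _ => by split_ifs <;> simp

theorem wordC_eq_strictLowerPart (A : Matrix (Fin n) (Fin n) K) (w : Fin m → Fin n) :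
    wordC A w = strictLowerPart ((A - 1).submatrix w w) :=
  rfl

theorem sdsF_eq_one_add_vecMulVec (A : Matrix (Fin n) (Fin n) K) (i : Fin n) :
    sdsF A i = 1 + vecMulVec ((1 : Matrix (Fin n) (Fin n) K) i) ((A - 1) i) := by
  ext k j
  rcases eq_or_ne k i with rfl | hk
  · simp [sdsF, vecMulVec_apply, one_apply]
  · simp [sdsF, vecMulVec_apply, one_apply, hk, hk.symm]

theorem wordMap_eq_prod (A : Matrix (Fin n) (Fin n) K) (w : Fin m → Fin n) :
    wordMap A w = ((List.finRange m).reverse.map fun p =>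
      1 + vecMulVec ((wordPlacement K w)ᵀ p) ((A - 1).submatrix w id p)).prod := by
  simp only [wordMap, sdsF_eq_one_add_vecMulVec]
  rfl

end WordSDS

theorem linear_sds_word_power_sum_formula_general {K : Type*} [Field K] {n m : ℕ}
    (A : Matrix (Fin n) (Fin n) K) (w : Fin m → Fin n) :
    wordMap A w = 1 + ∑ l ∈ Finset.range m, wordComp w (wordC A w ^ l) * (A - 1) := by
  rw [wordMap_eq_prod, prod_one_add_vecMulVec, mul_wordPlacement, submatrix_submatrix,
    Function.id_comp, Function.comp_id, ← wordC_eq_strictLowerPart, Matrix.mul_sum,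
    Matrix.sum_mul]
  simp only [wordComp_mul]

/-- **Intermediate formula for linear SDS over words.**
Let `w = w₁ ⋯ w_m` be a word over `{1, …, n}` containing every index at least once.
Then `F_{w_m}(A) ⋯ F_{w_1}(A) = I + Σ_{l=0}^{m-1} ^c(C^l) · (A − I)`. -/
theorem linear_sds_word_power_sum_formula {K : Type*} [Field K] {n m : ℕ}
    (A : Matrix (Fin n) (Fin n) K) (w : Fin m → Fin n)
    (hw : Function.Surjective w) :
    wordMap A w = 1 + ∑ l ∈ Finset.range m, wordComp w (wordC A w ^ l) * (A - 1) :=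
  linear_sds_word_power_sum_formula_general A w
end

section
/- Let K be a field and (P, ≤) a finite poset admitting a chain-partition C_1, …, C_n together with a C-cut splitting each C_i into a nonempty lower part C_i^{low} and a nonempty upper part C_i^{up}. Let U, U^{low}, U^{up} be the Moebius matrices over K of P, of the sub-poset P^{low} on ∪_i C_i^{low}, and of the sub-poset P^{up} on ∪_i C_i^{up}, respectively; let ^c denote compression with respect to the chains (of the corresponding part); let J_0 be the n×n matrix over K with [J_0]_{ij} = 1 if i ≠ j and the elements of C_i are comparable to those of C_j, and [J_0]_{ij} = 0 otherwise; and set J = I + J_0. Then ^c(U)·J = ^c(U^{low})·J + ^c(U^{up})·J − ^c(U^{low})·J·^c(U^{up})·J. -/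
open Matrix Finset

attribute [local instance] Classical.propDecidable

/-- The zeta matrix of a finite poset `Q` over `K`: entry `(x, y)` is `1` if `x ≤ y`
and `0` otherwise. -/
noncomputable def zetaM (K : Type*) [Field K] (Q : Type*) [Fintype Q] [PartialOrder Q] :
    Matrix Q Q K :=
  Matrix.of fun x y => if x ≤ y then 1 else 0

/-- The Moebius matrix of a finite poset `Q` over `K`: the inverse of its zeta matrix. -/
noncomputable def moebiusM (K : Type*) [Field K] (Q : Type*) [Fintype Q] [PartialOrder Q] :
    Matrix Q Q K :=
  (zetaM K Q)⁻¹

/-- Compression of a matrix `M` (indexed by a type `Q` of poset elements, mapping to `P`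
via `ι`) with respect to a family of chains `D : Fin n → Finset P`: the `(i,k)`-entry is
the sum of the entries `M x y` with `ι x` in the `i`-th chain and `ι y` in the `k`-th
chain. -/
noncomputable def chainComp {K P : Type*} [Field K] {n : ℕ} (D : Fin n → Finset P)
    {Q : Type*} [Fintype Q] (ι : Q → P) (M : Matrix Q Q K) :
    Matrix (Fin n) (Fin n) K :=
  Matrix.of fun i k => ∑ x : Q, ∑ y : Q, if ι x ∈ D i ∧ ι y ∈ D k then M x y else 0

/-! Order `P` as `Pˡᵒʷ` followed by `Pᵘᵖ`. Since `Pˡᵒʷ` is a lower set, the zeta matrix is block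
upper triangular, `Z = [[Zˡᵒʷ, Z₁₂], [0, Zᵘᵖ]]`, hence `U = [[Uˡᵒʷ, -Uˡᵒʷ Z₁₂ Uᵘᵖ], [0, Uᵘᵖ]]`.
Compression along a chain family is `Fᵀ M F` for its incidence matrix `F`, and the axioms of a
chain-partition with a cut say precisely that `Z₁₂ = Fˡᵒʷ J (Fᵘᵖ)ᵀ`: a lower element lies below an
upper one iff their chains are comparable. Compressing the block formula gives
`ᶜU = ᶜUˡᵒʷ + ᶜUᵘᵖ - ᶜUˡᵒʷ J ᶜUᵘᵖ`; multiply by `J` on the right. -/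

section Moebius

variable {K : Type*} [Field K]

lemma zetaM_isUnit (Q : Type*) [Fintype Q] [DecidableEq Q] [PartialOrder Q] :
    IsUnit (zetaM K Q) := by
  let _ : Fintype (LinearExtension Q) := ‹Fintype Q›
  let e : Q ≃ LinearExtension Q := Equiv.refl Q
  have hupper : (reindex e e (zetaM K Q)).IsUpperTriangular := fun a b hba => by
    change (if e.symm a ≤ e.symm b then (1 : K) else 0) = 0
    exact if_neg fun hab => ((toLinearExtension (α := Q)).monotone hab).not_gt hba
  have hdiag : ∀ a, reindex e e (zetaM K Q) a a = 1 := fun a => if_pos le_rfl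
  rw [isUnit_iff_isUnit_det, ← det_reindex_self e, det_of_isUpperTriangular hupper,
    Finset.prod_eq_one fun a _ => hdiag a]
  exact isUnit_one

def sumSubtypeEquivOfNotIff {P : Type*} (p q : P → Prop) [DecidablePred p]
    (h : ∀ x, ¬p x ↔ q x) :
    {x // p x} ⊕ {x // q x} ≃ P :=
  (Equiv.sumCongr (Equiv.refl _) (Equiv.subtypeEquivRight h).symm).trans (Equiv.sumCompl p)

lemma coe_sumSubtypeEquivOfNotIff {P : Type*} (p q : P → Prop) [DecidablePred p]
    (h : ∀ x, ¬p x ↔ q x) :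
    ⇑(sumSubtypeEquivOfNotIff p q h) = Sum.elim Subtype.val Subtype.val := by
  ext (a | b) <;> rfl

variable {P : Type*} [PartialOrder P] [Fintype P]

noncomputable def zetaBlock (K : Type*) [Field K] (p q : P → Prop) :
    Matrix {x // p x} {x // q x} K :=
  of fun a b => if (a : P) ≤ b then 1 else 0

variable {p q : P → Prop} [DecidablePred p] [DecidablePred q]

lemma zetaM_submatrix_sumSubtypeEquivOfNotIff (h : ∀ x, ¬p x ↔ q x)
    (hnot_le : ∀ b a, q b → p a → ¬b ≤ a) :
    (zetaM K P).submatrix (sumSubtypeEquivOfNotIff p q h) (sumSubtypeEquivOfNotIff p q h) =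
      fromBlocks (zetaM K {x // p x}) (zetaBlock K p q) 0 (zetaM K {x // q x}) := by
  ext (a | b) (a' | b')
  · rfl
  · rfl
  · exact if_neg (hnot_le b a' b.2 a'.2)
  · rfl

lemma moebiusM_submatrix_sumSubtypeEquivOfNotIff (h : ∀ x, ¬p x ↔ q x)
    (hnot_le : ∀ b a, q b → p a → ¬b ≤ a) :
    (moebiusM K P).submatrix (sumSubtypeEquivOfNotIff p q h) (sumSubtypeEquivOfNotIff p q h) =
      fromBlocks (moebiusM K {x // p x})
        (-(moebiusM K {x // p x} * zetaBlock K p q * moebiusM K {x // q x})) 0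
        (moebiusM K {x // q x}) := by
  rw [moebiusM, ← inv_submatrix_equiv, zetaM_submatrix_sumSubtypeEquivOfNotIff h hnot_le]
  convert inv_fromBlocks_zero₂₁_of_isUnit_iff (zetaM K {x // p x}) (zetaBlock K p q)
    (zetaM K {x // q x}) (iff_of_true (zetaM_isUnit _) (zetaM_isUnit _)) using 1
  -- the two sides differ only in the `DecidableEq` instances used by `⁻¹`
  unfold moebiusM
  congr!

end Moebius

section Compression

variable (K : Type*) {P : Type*} [Field K] {n : ℕ} (D : Fin n → Finset P)

noncomputable def chainIncidence {Q : Type*} (ι : Q → P) : Matrix Q (Fin n) K :=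
  of fun x i => if ι x ∈ D i then 1 else 0

variable {K}

lemma chainComp_eq_transpose_mul_mul {Q : Type*} [Fintype Q] (ι : Q → P) (M : Matrix Q Q K) :
    chainComp D ι M = (chainIncidence K D ι)ᵀ * M * chainIncidence K D ι := by
  ext i k
  simp only [chainComp, chainIncidence, of_apply, mul_apply, transpose_apply, Finset.sum_mul]
  rw [Finset.sum_comm]
  refine Finset.sum_congr rfl fun x _ => Finset.sum_congr rfl fun y _ => ?_
  split_ifs <;> simp_all

lemma chainComp_submatrix_equiv {Q Q' : Type*} [Fintype Q] [Fintype Q'] (e : Q' ≃ Q)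
    (ι : Q → P) (M : Matrix Q Q K) :
    chainComp D (ι ∘ e) (M.submatrix e e) = chainComp D ι M := by
  ext i k
  simp only [chainComp, of_apply, Function.comp_apply, submatrix_apply]
  exact Fintype.sum_equiv e _ _ fun x => Fintype.sum_equiv e _ _ fun y => rfl

lemma chainIncidence_sumElim {Q₁ Q₂ : Type*} (f : Q₁ → P) (g : Q₂ → P) :
    chainIncidence K D (Sum.elim f g) =
      fromRows (chainIncidence K D f) (chainIncidence K D g) := by
  ext (x | x) i <;> rfl

lemma chainComp_sumElim_fromBlocks {Q₁ Q₂ : Type*} [Fintype Q₁] [Fintype Q₂] (f : Q₁ → P)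
    (g : Q₂ → P) (A : Matrix Q₁ Q₁ K) (B : Matrix Q₁ Q₂ K) (C : Matrix Q₂ Q₁ K)
    (E : Matrix Q₂ Q₂ K) :
    chainComp D (Sum.elim f g) (fromBlocks A B C E) =
      (chainIncidence K D f)ᵀ * A * chainIncidence K D f +
        (chainIncidence K D f)ᵀ * B * chainIncidence K D g +
        (chainIncidence K D g)ᵀ * C * chainIncidence K D f +
        (chainIncidence K D g)ᵀ * E * chainIncidence K D g := by
  rw [chainComp_eq_transpose_mul_mul, chainIncidence_sumElim, transpose_fromRows,
    fromCols_mul_fromBlocks, fromCols_mul_fromRows, Matrix.add_mul, Matrix.add_mul]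
  abel

lemma chainIncidence_congr {D₁ D₂ : Fin n → Finset P} {Q : Type*} {ι : Q → P}
    (h : ∀ x i, ι x ∈ D₁ i ↔ ι x ∈ D₂ i) :
    chainIncidence K D₁ ι = chainIncidence K D₂ ι := by
  ext x i
  exact if_congr (h x i) rfl rfl

end Compression

section Cut

variable {K P : Type*} [Field K] [PartialOrder P] [Fintype P] {n : ℕ}
  {p q : P → Prop} [DecidablePred p] [DecidablePred q]

lemma chainComp_moebiusM_eq_of_split (h : ∀ x, ¬p x ↔ q x)
    (hnot_le : ∀ b a, q b → p a → ¬b ≤ a) {D Dp Dq : Fin n → Finset P}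
    (hDp : ∀ (x : {x // p x}) i, x.1 ∈ D i ↔ x.1 ∈ Dp i)
    (hDq : ∀ (x : {x // q x}) i, x.1 ∈ D i ↔ x.1 ∈ Dq i) (J : Matrix (Fin n) (Fin n) K)
    (hzeta : zetaBlock K p q =
      chainIncidence K Dp Subtype.val * J * (chainIncidence K Dq Subtype.val)ᵀ) :
    chainComp D id (moebiusM K P) =
      chainComp Dp Subtype.val (moebiusM K {x // p x}) +
        chainComp Dq Subtype.val (moebiusM K {x // q x}) -
        chainComp Dp Subtype.val (moebiusM K {x // p x}) * J *
          chainComp Dq Subtype.val (moebiusM K {x // q x}) := by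
  rw [← chainComp_submatrix_equiv D (sumSubtypeEquivOfNotIff p q h),
    moebiusM_submatrix_sumSubtypeEquivOfNotIff h hnot_le, Function.id_comp,
    coe_sumSubtypeEquivOfNotIff, chainComp_sumElim_fromBlocks, chainIncidence_congr hDp,
    chainIncidence_congr hDq, chainComp_eq_transpose_mul_mul Dp, chainComp_eq_transpose_mul_mul Dq, hzeta]
  simp only [Matrix.mul_zero, Matrix.zero_mul, add_zero, Matrix.mul_neg, Matrix.neg_mul,
    Matrix.mul_assoc]
  abel

end Cut

section ChainCut

open Function

variable {K P : Type*} [Field K] {n : ℕ}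

lemma eq_of_mem_of_pairwise_disjoint {D : Fin n → Finset P} (hD : Pairwise (Disjoint on D))
    {x : P} {i j : Fin n} (hi : x ∈ D i) (hj : x ∈ D j) : i = j :=
  hD.eq (Finset.not_disjoint_iff.2 ⟨x, hi, hj⟩)

lemma mem_iff_mem_of_subset {C D : Fin n → Finset P} (hC : Pairwise (Disjoint on C))
    (hDC : ∀ i, D i ⊆ C i) {x : P} (hx : ∃ j, x ∈ D j) (i : Fin n) : x ∈ C i ↔ x ∈ D i := by
  obtain ⟨j, hj⟩ := hx
  exact ⟨fun hi => eq_of_mem_of_pairwise_disjoint hC (hDC j hj) hi ▸ hj, fun hi => hDC i hi⟩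

lemma chainIncidence_apply_eq_single {D : Fin n → Finset P} (hD : Pairwise (Disjoint on D))
    {Q : Type*} {ι : Q → P} {x : Q} {i : Fin n} (hx : ι x ∈ D i) :
    chainIncidence K D ι x = Pi.single i 1 := by
  ext j
  by_cases hji : j = i
  · subst hji
    simp [chainIncidence, hx]
  · simp only [chainIncidence, of_apply, Pi.single_apply, hji, if_false]
    exact if_neg fun hj => hji (eq_of_mem_of_pairwise_disjoint hD hj hx)

lemma mul_mul_transpose_apply_of_eq_single {X Y m m' : Type*} [Fintype m] [Fintype m']
    [DecidableEq m] [DecidableEq m'] {F : Matrix X m K} {G : Matrix Y m' K} {x : X} {y : Y}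
    {i : m} {l : m'} (hF : F x = Pi.single i 1) (hG : G y = Pi.single l 1) (J : Matrix m m' K) :
    (F * J * Gᵀ) x y = J i l := by
  simp [mul_apply, hF, hG, Pi.single_apply]

lemma one_add_of_ite_ne_and_eq_of_refl {m : Type*} [DecidableEq m] (R : m → m → Prop)
    [DecidableRel R] [∀ i j, Decidable (i ≠ j ∧ R i j)] (hR : ∀ i, R i i) :
    (1 + of fun i j => if i ≠ j ∧ R i j then (1 : K) else 0) =
      of fun i j => if R i j then 1 else 0 := by
  ext i j
  by_cases hij : i = j
  · subst hij
    simp [hR]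
  · simp [hij]

lemma zetaBlock_eq_chainIncidence_mul_mul [PartialOrder P] [Fintype P]
    {D D' : Fin n → Finset P} (hD : Pairwise (Disjoint on D)) (hD' : Pairwise (Disjoint on D'))
    (R : Fin n → Fin n → Prop) [DecidableRel R]
    (hle : ∀ j l, ∀ a ∈ D j, ∀ b ∈ D' l, (a ≤ b ↔ R j l)) :
    zetaBlock K (fun x => ∃ i, x ∈ D i) (fun x => ∃ i, x ∈ D' i) =
      chainIncidence K D Subtype.val * (of fun j l => if R j l then (1 : K) else 0) *
        (chainIncidence K D' Subtype.val)ᵀ := by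
  ext ⟨a, j, ha⟩ ⟨b, l, hb⟩
  rw [mul_mul_transpose_apply_of_eq_single (chainIncidence_apply_eq_single hD ha)
    (chainIncidence_apply_eq_single hD' hb)]
  exact if_congr (hle j l a ha b hb) rfl rfl

variable {C lowC upC : Fin n → Finset P}

lemma not_exists_mem_low_iff_exists_mem_up (hCdisj : Pairwise (Disjoint on C))
    (hCcover : ∀ x : P, ∃ i, x ∈ C i)
    (hsplit : ∀ i, lowC i ∪ upC i = C i) (hludisj : ∀ i, Disjoint (lowC i) (upC i)) (x : P) :
    (¬∃ i, x ∈ lowC i) ↔ ∃ i, x ∈ upC i := by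
  constructor
  · intro hx
    obtain ⟨i, hi⟩ := hCcover x
    rw [← hsplit i, Finset.mem_union] at hi
    exact ⟨i, hi.resolve_left fun h => hx ⟨i, h⟩⟩
  · rintro ⟨j, hj⟩ ⟨i, hi⟩
    have hsub : ∀ i, lowC i ∪ upC i ⊆ C i := fun i => (hsplit i).le
    obtain rfl := eq_of_mem_of_pairwise_disjoint hCdisj (hsub i (Finset.mem_union_left _ hi))
      (hsub j (Finset.mem_union_right _ hj))
    exact Finset.disjoint_left.mp (hludisj i) hi hj

variable [PartialOrder P]

lemma le_iff_chains_comparable (hChain : ∀ i, IsChain (· ≤ ·) (C i : Set P))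
    (hCcomp : ∀ i j, i ≠ j → (∃ x ∈ C i, ∃ y ∈ C j, x ≤ y ∨ y ≤ x) →
      ∀ x ∈ C i, ∀ y ∈ C j, x ≤ y ∨ y ≤ x)
    (hlow : ∀ i, lowC i ⊆ C i) (hup : ∀ i, upC i ⊆ C i)
    (hcut : ∀ i j, ∀ x ∈ lowC i, ∀ y ∈ upC j, (x ≤ y ∨ y ≤ x) → x < y)
    {j l : Fin n} {a b : P} (ha : a ∈ lowC j) (hb : b ∈ upC l) :
    a ≤ b ↔ ∀ x ∈ C j, ∀ y ∈ C l, x ≤ y ∨ y ≤ x := by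
  refine ⟨fun hab => ?_, fun hall => (hcut j l a ha b hb (hall a (hlow j ha) b (hup l hb))).le⟩
  by_cases hjl : j = l
  · subst hjl
    exact fun x hx y hy => (hChain j).total hx hy
  · exact hCcomp j l hjl ⟨a, hlow j ha, b, hup l hb, Or.inl hab⟩

end ChainCut

theorem moebius_cut_theorem_general {K P : Type*} [Field K] [PartialOrder P] [Fintype P]
    {n : ℕ} (C lowC upC : Fin n → Finset P)
    (hChain : ∀ i, IsChain (· ≤ ·) (C i : Set P))
    (hCdisj : ∀ i j, i ≠ j → Disjoint (C i) (C j))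
    (hCcover : ∀ x : P, ∃ i, x ∈ C i)
    (hCcomp : ∀ i j, i ≠ j → (∃ x ∈ C i, ∃ y ∈ C j, x ≤ y ∨ y ≤ x) →
      ∀ x ∈ C i, ∀ y ∈ C j, x ≤ y ∨ y ≤ x)
    (hsplit : ∀ i, lowC i ∪ upC i = C i)
    (hludisj : ∀ i, Disjoint (lowC i) (upC i))
    (hcut : ∀ i j, ∀ x ∈ lowC i, ∀ y ∈ upC j, (x ≤ y ∨ y ≤ x) → x < y)
    (J : Matrix (Fin n) (Fin n) K)
    (hJ : J = 1 + Matrix.of fun i j : Fin n =>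
      if i ≠ j ∧ ∀ x ∈ C i, ∀ y ∈ C j, x ≤ y ∨ y ≤ x then (1 : K) else 0)
    (cU cUlow cUup : Matrix (Fin n) (Fin n) K)
    (hcU : cU = chainComp C (id : P → P) (moebiusM K P))
    (hcUlow : cUlow = chainComp lowC (Subtype.val : {x : P // ∃ i, x ∈ lowC i} → P)
      (moebiusM K {x : P // ∃ i, x ∈ lowC i}))
    (hcUup : cUup = chainComp upC (Subtype.val : {x : P // ∃ i, x ∈ upC i} → P)
      (moebiusM K {x : P // ∃ i, x ∈ upC i})) :
    cU * J = cUlow * J + cUup * J - cUlow * J * (cUup * J) := by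
  have hlow : ∀ i, lowC i ⊆ C i := fun i => hsplit i ▸ Finset.subset_union_left
  have hup : ∀ i, upC i ⊆ C i := fun i => hsplit i ▸ Finset.subset_union_right
  have hnot_le : ∀ b a : P, (∃ i, b ∈ upC i) → (∃ i, a ∈ lowC i) → ¬b ≤ a :=
    fun b a ⟨j, hb⟩ ⟨i, ha⟩ hba => (hcut i j a ha b hb (Or.inr hba)).not_ge hba
  have hJ' : J = of fun j l => if ∀ x ∈ C j, ∀ y ∈ C l, x ≤ y ∨ y ≤ x then 1 else 0 :=
    hJ.trans (one_add_of_ite_ne_and_eq_of_refl _ fun i _ hx _ hy => (hChain i).total hx hy)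
  have hzeta : zetaBlock K (fun x => ∃ i, x ∈ lowC i) (fun x => ∃ i, x ∈ upC i) =
      chainIncidence K lowC Subtype.val * J * (chainIncidence K upC Subtype.val)ᵀ := by
    rw [hJ']
    exact zetaBlock_eq_chainIncidence_mul_mul
      (fun i j h => (hCdisj i j h).mono (hlow i) (hlow j))
      (fun i j h => (hCdisj i j h).mono (hup i) (hup j)) _
      fun j l a ha b hb => le_iff_chains_comparable hChain hCcomp hlow hup hcut ha hb
  rw [hcU, hcUlow, hcUup, chainComp_moebiusM_eq_of_split
    (not_exists_mem_low_iff_exists_mem_up hCdisj hCcover hsplit hludisj) hnot_le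
    (fun x => mem_iff_mem_of_subset hCdisj hlow x.2)
    (fun x => mem_iff_mem_of_subset hCdisj hup x.2) J hzeta]
  noncomm_ring

/-- **Cut theorem for Moebius functions of posets (general form).**
Let `P` be a finite poset with a chain-partition `C₁, …, Cₙ` (pairwise disjoint
nonempty chains covering `P`, such that comparability of some pair of elements of `Cᵢ`
and `Cⱼ` forces comparability of all such pairs) and a `C`-cut splitting each `Cᵢ` into
a nonempty lower part `Cᵢˡᵒʷ` and a nonempty upper part `Cᵢᵘᵖ`, such that comparable
elements `x ∈ Cᵢˡᵒʷ`, `y ∈ Cⱼᵘᵖ` always satisfy `x < y`. Let `U`, `Uˡᵒʷ`, `Uᵘᵖ` be the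
Moebius matrices of `P`, `Pˡᵒʷ = ∪ᵢ Cᵢˡᵒʷ`, `Pᵘᵖ = ∪ᵢ Cᵢᵘᵖ` (with their induced
orders), let `cU`, `cUlow`, `cUup` denote their compressions along the respective
chains, and let `J = I + J₀` where `J₀` is the chain-comparability adjacency matrix.
Then `^c(U)·J = ^c(Uˡᵒʷ)·J + ^c(Uᵘᵖ)·J − ^c(Uˡᵒʷ)·J·^c(Uᵘᵖ)·J`. -/
theorem moebius_cut_theorem {K P : Type*} [Field K] [PartialOrder P] [Fintype P]
    {n : ℕ} (C lowC upC : Fin n → Finset P)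
    (hChain : ∀ i, IsChain (· ≤ ·) (C i : Set P))
    (hCdisj : ∀ i j, i ≠ j → Disjoint (C i) (C j))
    (hCcover : ∀ x : P, ∃ i, x ∈ C i)
    (hCcomp : ∀ i j, i ≠ j → (∃ x ∈ C i, ∃ y ∈ C j, x ≤ y ∨ y ≤ x) →
      ∀ x ∈ C i, ∀ y ∈ C j, x ≤ y ∨ y ≤ x)
    (hsplit : ∀ i, lowC i ∪ upC i = C i)
    (hludisj : ∀ i, Disjoint (lowC i) (upC i))
    (hlowne : ∀ i, (lowC i).Nonempty)
    (hupne : ∀ i, (upC i).Nonempty)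
    (hcut : ∀ i j, ∀ x ∈ lowC i, ∀ y ∈ upC j, (x ≤ y ∨ y ≤ x) → x < y)
    (J : Matrix (Fin n) (Fin n) K)
    (hJ : J = 1 + Matrix.of fun i j : Fin n =>
      if i ≠ j ∧ ∀ x ∈ C i, ∀ y ∈ C j, x ≤ y ∨ y ≤ x then (1 : K) else 0)
    (cU cUlow cUup : Matrix (Fin n) (Fin n) K)
    (hcU : cU = chainComp C (id : P → P) (moebiusM K P))
    (hcUlow : cUlow = chainComp lowC (Subtype.val : {x : P // ∃ i, x ∈ lowC i} → P)
      (moebiusM K {x : P // ∃ i, x ∈ lowC i}))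
    (hcUup : cUup = chainComp upC (Subtype.val : {x : P // ∃ i, x ∈ upC i} → P)
      (moebiusM K {x : P // ∃ i, x ∈ upC i})) :
    cU * J = cUlow * J + cUup * J - cUlow * J * (cUup * J) :=
  moebius_cut_theorem_general C lowC upC hChain hCdisj hCcover hCcomp hsplit hludisj hcut J hJ cU
    cUlow cUup hcU hcUlow hcUup
end

section
/- Let K be a field and (P, ≤) a finite poset admitting a chain-partition C_1, …, C_n together with a C-cut splitting each C_i into a nonempty lower part C_i^{low} and a nonempty upper part C_i^{up}. Let U, U^{low}, U^{up} be the Moebius matrices over K of P, P^{low}, and P^{up}, let ^c denote compression with respect to the chains, and let J = I + J_0 where J_0 is the chain-comparability adjacency matrix. If J is invertible over K, then ^c(U) = ^c(U^{low}) + ^c(U^{up}) − ^c(U^{low})·J·^c(U^{up}). -/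
/-!
Cutting every chain makes `Pˡᵒʷ` a lower set of `P` with complement `Pᵘᵖ`. Ordering `P` as
`Pˡᵒʷ ⊕ Pᵘᵖ`, the zeta matrix is block upper triangular with diagonal blocks the zeta matrices of
the two parts and corner `B = [x ≤ y]`, so the Moebius matrix is `[[Uˡᵒʷ, -Uˡᵒʷ B Uᵘᵖ], [0, Uᵘᵖ]]`.
Compression is conjugation by the 0/1 chain-membership matrix `E`, and `B = E_lowᵀ J E_up`: for
`x` in the `i`-th lower part and `y` in the `k`-th upper part, `x ≤ y` iff `i = k` or `Cᵢ` and
`Cₖ` are comparable. Expanding the block product gives the formula.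
-/

open Matrix Finset

attribute [local instance] Classical.propDecidable

section Zeta

variable (K : Type*) [Field K] (Q : Type*) [Fintype Q] [DecidableEq Q] [PartialOrder Q]

theorem isUnit_zetaM : IsUnit (zetaM K Q) := by
  let _ : Fintype (LinearExtension Q) := inferInstanceAs (Fintype Q)
  let e : LinearExtension Q ≃ Q := Equiv.refl Q
  have htri : ((zetaM K Q).submatrix e e).BlockTriangular id := fun i j hij => by
    simp only [Matrix.submatrix_apply, zetaM, Matrix.of_apply, ite_eq_right_iff]
    intro hle
    have hm := toLinearExtension.monotone hle
    exact absurd hij (not_lt.mpr hm)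
  rw [Matrix.isUnit_iff_isUnit_det, ← Matrix.det_submatrix_equiv_self e,
    Matrix.det_of_isUpperTriangular htri]
  simp [zetaM]

theorem moebiusM_eq_inv : moebiusM K Q = (zetaM K Q)⁻¹ := by
  rw [moebiusM]
  congr!

end Zeta

noncomputable def Equiv.sumComplOfIffNot {α : Type*} {p q : α → Prop} (hq : ∀ x, q x ↔ ¬ p x) :
    {x // p x} ⊕ {x // q x} ≃ α :=
  (Equiv.sumCongr (Equiv.refl _) (Equiv.subtypeEquivRight hq)).trans (Equiv.sumCompl p)

section LowerSet

variable (K : Type*) [Field K] {P : Type*} [Fintype P] [PartialOrder P] {p q : P → Prop}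

theorem zetaM_submatrix_sumComplOfIffNot (hp : IsLowerSet {x | p x}) (hq : ∀ x, q x ↔ ¬ p x) :
    (zetaM K P).submatrix (Equiv.sumComplOfIffNot hq) (Equiv.sumComplOfIffNot hq) =
      fromBlocks (zetaM K {x // p x}) ((zetaM K P).submatrix Subtype.val Subtype.val) 0
        (zetaM K {x // q x}) := by
  ext (a | a) (b | b)
  · rfl
  · rfl
  · have : ¬ (a : P) ≤ b := fun hab => (hq a).mp a.2 (hp hab b.2)
    simp [zetaM, Equiv.sumComplOfIffNot, this]
  · rfl

theorem moebiusM_submatrix_sumComplOfIffNot (hp : IsLowerSet {x | p x}) (hq : ∀ x, q x ↔ ¬ p x) :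
    (moebiusM K P).submatrix (Equiv.sumComplOfIffNot hq) (Equiv.sumComplOfIffNot hq) =
      fromBlocks (moebiusM K {x // p x})
        (-(moebiusM K {x // p x} *
          ((zetaM K P).submatrix Subtype.val Subtype.val : Matrix {x // p x} {x // q x} K) *
          moebiusM K {x // q x})) 0 (moebiusM K {x // q x}) := by
  rw [moebiusM_eq_inv, moebiusM_eq_inv, moebiusM_eq_inv, ← Matrix.inv_submatrix_equiv,
    zetaM_submatrix_sumComplOfIffNot K hp hq, Matrix.inv_fromBlocks_zero₂₁_of_isUnit_iff _ _ _
      (iff_of_true (isUnit_zetaM K _) (isUnit_zetaM K _))]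

end LowerSet

theorem chainComp_eq_of_mem_iff {K P Q : Type*} [Field K] [Fintype Q] {n : ℕ}
    {D : Fin n → Finset P} {ι : Q → P} (f : Q → Fin n) (hf : ∀ x i, ι x ∈ D i ↔ f x = i)
    (M : Matrix Q Q K) :
    chainComp D ι M = (1 : Matrix (Fin n) (Fin n) K).submatrix id f * M *
      ((1 : Matrix (Fin n) (Fin n) K).submatrix id f)ᵀ := by
  ext i k
  simp only [chainComp, hf, @eq_comm _ (f _), Matrix.of_apply, Matrix.mul_apply,
    Matrix.submatrix_apply, Matrix.transpose_apply, Matrix.one_apply, id, Finset.sum_mul]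
  rw [Finset.sum_comm]
  refine Finset.sum_congr rfl fun y _ => Finset.sum_congr rfl fun x _ => ?_
  by_cases hx : i = f x <;> by_cases hy : k = f y <;> simp [hx, hy]

theorem transpose_submatrix_one_mul_mul_submatrix_one {m p q R : Type*} [Fintype m]
    [DecidableEq m] [NonAssocSemiring R] (f : p → m) (g : q → m) (J : Matrix m m R) :
    ((1 : Matrix m m R).submatrix id f)ᵀ * J * (1 : Matrix m m R).submatrix id g =
      J.submatrix f g := by
  ext a b
  simp [Matrix.mul_apply, Matrix.one_apply]

theorem fromCols_mul_fromBlocks_mul_transpose {m n₁ n₂ R : Type*} [Fintype m] [Fintype n₁]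
    [Fintype n₂] [CommRing R] (E₁ : Matrix m n₁ R) (E₂ : Matrix m n₂ R) (A : Matrix n₁ n₁ R)
    (D : Matrix n₂ n₂ R) (J : Matrix m m R) :
    fromCols E₁ E₂ * fromBlocks A (-(A * (E₁ᵀ * J * E₂) * D)) 0 D * (fromCols E₁ E₂)ᵀ =
      E₁ * A * E₁ᵀ + E₂ * D * E₂ᵀ - E₁ * A * E₁ᵀ * J * (E₂ * D * E₂ᵀ) := by
  rw [Matrix.transpose_fromCols, Matrix.fromCols_mul_fromBlocks, Matrix.fromCols_mul_fromRows]
  simp only [Matrix.mul_zero, add_zero, Matrix.mul_neg, Matrix.neg_mul, Matrix.add_mul,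
    Matrix.mul_assoc]
  abel

theorem mul_mul_transpose_eq_submatrix {m n o R : Type*} [Fintype n] [Fintype o] [Mul R]
    [AddCommMonoid R] (E : Matrix m n R) (M : Matrix n n R) (e : o ≃ n) :
    E * M * Eᵀ = E.submatrix id e * M.submatrix e e * (E.submatrix id e)ᵀ := by
  rw [Matrix.transpose_submatrix, Matrix.submatrix_mul_equiv, Matrix.submatrix_mul_equiv,
    Matrix.submatrix_id_id]

theorem exists_mem_iff_eq_of_pairwise_disjoint {α ι : Type*} {C : ι → Finset α}
    (hdisj : ∀ i j, i ≠ j → Disjoint (C i) (C j)) (hcover : ∀ x, ∃ i, x ∈ C i) :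
    ∃ c : α → ι, ∀ x i, x ∈ C i ↔ c x = i := by
  choose c hc using hcover
  refine ⟨c, fun x i => ⟨fun hx => ?_, fun h => h ▸ hc x⟩⟩
  by_contra h
  exact Finset.disjoint_left.mp (hdisj _ _ h) (hc x) hx

section Cut

variable {P : Type*} [PartialOrder P] {n : ℕ} {C lowC upC : Fin n → Finset P}

theorem notMem_upC_of_mem_lowC
    (hcut : ∀ i j, ∀ x ∈ lowC i, ∀ y ∈ upC j, (x ≤ y ∨ y ≤ x) → x < y)
    {x : P} {i : Fin n} (hx : x ∈ lowC i) (j : Fin n) : x ∉ upC j :=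
  fun hx' => lt_irrefl x (hcut i j x hx x hx' (Or.inl le_rfl))

theorem exists_mem_upC_iff_not_exists_mem_lowC (hCcover : ∀ x : P, ∃ i, x ∈ C i)
    (hsplit : ∀ i, lowC i ∪ upC i = C i)
    (hcut : ∀ i j, ∀ x ∈ lowC i, ∀ y ∈ upC j, (x ≤ y ∨ y ≤ x) → x < y) (x : P) :
    (∃ i, x ∈ upC i) ↔ ¬ ∃ i, x ∈ lowC i := by
  refine ⟨fun ⟨j, hj⟩ ⟨i, hi⟩ => notMem_upC_of_mem_lowC hcut hi j hj, fun hlow => ?_⟩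
  obtain ⟨i, hi⟩ := hCcover x
  rw [← hsplit i, Finset.mem_union] at hi
  exact hi.elim (fun h => absurd ⟨i, h⟩ hlow) (fun h => ⟨i, h⟩)

theorem isLowerSet_setOf_exists_mem_lowC (hCcover : ∀ x : P, ∃ i, x ∈ C i)
    (hsplit : ∀ i, lowC i ∪ upC i = C i)
    (hcut : ∀ i j, ∀ x ∈ lowC i, ∀ y ∈ upC j, (x ≤ y ∨ y ≤ x) → x < y) :
    IsLowerSet {x | ∃ i, x ∈ lowC i} := by
  rintro x y hyx ⟨i, hx⟩
  by_contra hy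
  obtain ⟨j, hy⟩ := (exists_mem_upC_iff_not_exists_mem_lowC hCcover hsplit hcut y).mpr hy
  exact (hcut i j x hx y hy (Or.inr hyx)).not_ge hyx

theorem mem_lowC_iff {c : P → Fin n} (hc : ∀ x i, x ∈ C i ↔ c x = i)
    (hsplit : ∀ i, lowC i ∪ upC i = C i)
    (hcut : ∀ i j, ∀ x ∈ lowC i, ∀ y ∈ upC j, (x ≤ y ∨ y ≤ x) → x < y)
    {x : P} (hx : ∃ j, x ∈ lowC j) (i : Fin n) : x ∈ lowC i ↔ c x = i := by
  obtain ⟨j, hj⟩ := hx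
  rw [← hc, ← hsplit, Finset.mem_union, or_iff_left (notMem_upC_of_mem_lowC hcut hj i)]

theorem mem_upC_iff {c : P → Fin n} (hc : ∀ x i, x ∈ C i ↔ c x = i)
    (hsplit : ∀ i, lowC i ∪ upC i = C i)
    (hcut : ∀ i j, ∀ x ∈ lowC i, ∀ y ∈ upC j, (x ≤ y ∨ y ≤ x) → x < y)
    {x : P} (hx : ∃ j, x ∈ upC j) (i : Fin n) : x ∈ upC i ↔ c x = i := by
  obtain ⟨j, hj⟩ := hx
  rw [← hc, ← hsplit, Finset.mem_union,
    or_iff_right fun hi => notMem_upC_of_mem_lowC hcut hi j hj]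

theorem le_iff_of_mem_lowC_of_mem_upC (hChain : ∀ i, IsChain (· ≤ ·) (C i : Set P))
    (hCcomp : ∀ i j, i ≠ j → (∃ x ∈ C i, ∃ y ∈ C j, x ≤ y ∨ y ≤ x) →
      ∀ x ∈ C i, ∀ y ∈ C j, x ≤ y ∨ y ≤ x)
    (hsplit : ∀ i, lowC i ∪ upC i = C i)
    (hcut : ∀ i j, ∀ x ∈ lowC i, ∀ y ∈ upC j, (x ≤ y ∨ y ≤ x) → x < y)
    {x y : P} {i k : Fin n} (hx : x ∈ lowC i) (hy : y ∈ upC k) :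
    x ≤ y ↔ i = k ∨ (i ≠ k ∧ ∀ x ∈ C i, ∀ y ∈ C k, x ≤ y ∨ y ≤ x) := by
  have hxC : x ∈ C i := hsplit i ▸ Finset.mem_union_left _ hx
  have hyC : y ∈ C k := hsplit k ▸ Finset.mem_union_right _ hy
  refine ⟨fun hxy => ?_, ?_⟩
  · rcases eq_or_ne i k with hik | hik
    · exact Or.inl hik
    · exact Or.inr ⟨hik, hCcomp i k hik ⟨x, hxC, y, hyC, Or.inl hxy⟩⟩
  rintro (rfl | ⟨-, hall⟩)
  · have hxy : x ≠ y := fun h => notMem_upC_of_mem_lowC hcut hx i (h ▸ hy)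
    exact (hcut i i x hx y hy (hChain i hxC hyC hxy)).le
  · exact (hcut i k x hx y hy (hall x hxC y hyC)).le

theorem zetaM_submatrix_lowC_upC (K : Type*) [Field K] [Fintype P]
    (hChain : ∀ i, IsChain (· ≤ ·) (C i : Set P))
    (hCcomp : ∀ i j, i ≠ j → (∃ x ∈ C i, ∃ y ∈ C j, x ≤ y ∨ y ≤ x) →
      ∀ x ∈ C i, ∀ y ∈ C j, x ≤ y ∨ y ≤ x)
    (hsplit : ∀ i, lowC i ∪ upC i = C i)
    (hcut : ∀ i j, ∀ x ∈ lowC i, ∀ y ∈ upC j, (x ≤ y ∨ y ≤ x) → x < y)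
    {c : P → Fin n} (hc : ∀ x i, x ∈ C i ↔ c x = i) {J : Matrix (Fin n) (Fin n) K}
    (hJ : J = 1 + Matrix.of fun i j : Fin n =>
      if i ≠ j ∧ ∀ x ∈ C i, ∀ y ∈ C j, x ≤ y ∨ y ≤ x then (1 : K) else 0) :
    ((zetaM K P).submatrix Subtype.val Subtype.val :
        Matrix {x // ∃ i, x ∈ lowC i} {x // ∃ i, x ∈ upC i} K) =
      J.submatrix (c ∘ Subtype.val) (c ∘ Subtype.val) := by
  ext x y
  have hx : (x : P) ∈ lowC (c x) := (mem_lowC_iff hc hsplit hcut x.2 _).mpr rfl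
  have hy : (y : P) ∈ upC (c y) := (mem_upC_iff hc hsplit hcut y.2 _).mpr rfl
  simp only [zetaM, hJ, Matrix.submatrix_apply, Matrix.of_apply, Matrix.add_apply,
    Matrix.one_apply, Function.comp_apply,
    le_iff_of_mem_lowC_of_mem_upC hChain hCcomp hsplit hcut hx hy]
  by_cases hxy : c x = c y <;> simp [hxy]

end Cut

theorem moebius_cut_theorem_of_isUnit_general {K P : Type*} [Field K] [PartialOrder P] [Fintype P]
    {n : ℕ} (C lowC upC : Fin n → Finset P)
    (hChain : ∀ i, IsChain (· ≤ ·) (C i : Set P))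
    (hCdisj : ∀ i j, i ≠ j → Disjoint (C i) (C j))
    (hCcover : ∀ x : P, ∃ i, x ∈ C i)
    (hCcomp : ∀ i j, i ≠ j → (∃ x ∈ C i, ∃ y ∈ C j, x ≤ y ∨ y ≤ x) →
      ∀ x ∈ C i, ∀ y ∈ C j, x ≤ y ∨ y ≤ x)
    (hsplit : ∀ i, lowC i ∪ upC i = C i)
    (hcut : ∀ i j, ∀ x ∈ lowC i, ∀ y ∈ upC j, (x ≤ y ∨ y ≤ x) → x < y)
    (J : Matrix (Fin n) (Fin n) K)
    (hJ : J = 1 + Matrix.of fun i j : Fin n =>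
      if i ≠ j ∧ ∀ x ∈ C i, ∀ y ∈ C j, x ≤ y ∨ y ≤ x then (1 : K) else 0)
    (cU cUlow cUup : Matrix (Fin n) (Fin n) K)
    (hcU : cU = chainComp C (id : P → P) (moebiusM K P))
    (hcUlow : cUlow = chainComp lowC (Subtype.val : {x : P // ∃ i, x ∈ lowC i} → P)
      (moebiusM K {x : P // ∃ i, x ∈ lowC i}))
    (hcUup : cUup = chainComp upC (Subtype.val : {x : P // ∃ i, x ∈ upC i} → P)
      (moebiusM K {x : P // ∃ i, x ∈ upC i})) :
    cU = cUlow + cUup - cUlow * J * cUup := by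
  obtain ⟨c, hc⟩ := exists_mem_iff_eq_of_pairwise_disjoint hCdisj hCcover
  have hup := exists_mem_upC_iff_not_exists_mem_lowC hCcover hsplit hcut
  let e := Equiv.sumComplOfIffNot hup
  let E : Matrix (Fin n) P K := (1 : Matrix (Fin n) (Fin n) K).submatrix id c
  let Elow : Matrix (Fin n) {x // ∃ i, x ∈ lowC i} K :=
    (1 : Matrix (Fin n) (Fin n) K).submatrix id (c ∘ Subtype.val)
  let Eup : Matrix (Fin n) {x // ∃ i, x ∈ upC i} K :=
    (1 : Matrix (Fin n) (Fin n) K).submatrix id (c ∘ Subtype.val)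
  have hE : E.submatrix id e = fromCols Elow Eup := by
    ext i (x | x) <;> rfl
  have hB : ((zetaM K P).submatrix Subtype.val Subtype.val :
        Matrix {x // ∃ i, x ∈ lowC i} {x // ∃ i, x ∈ upC i} K) = Elowᵀ * J * Eup := by
    rw [transpose_submatrix_one_mul_mul_submatrix_one]
    exact zetaM_submatrix_lowC_upC K hChain hCcomp hsplit hcut hc hJ
  rw [hcU, hcUlow, hcUup, chainComp_eq_of_mem_iff (ι := id) c hc,
    chainComp_eq_of_mem_iff (c ∘ Subtype.val) (mem_lowC_iff hc hsplit hcut ·.2),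
    chainComp_eq_of_mem_iff (c ∘ Subtype.val) (mem_upC_iff hc hsplit hcut ·.2),
    mul_mul_transpose_eq_submatrix E _ e, hE, moebiusM_submatrix_sumComplOfIffNot K
      (isLowerSet_setOf_exists_mem_lowC hCcover hsplit hcut), hB]
  -- the two sides differ only in the (subsingleton) `Fintype` instances of the subtypes
  convert fromCols_mul_fromBlocks_mul_transpose Elow Eup _ _ J

/-- **Cut theorem for Moebius functions of posets (invertible form).**
Let `P` be a finite poset with a chain-partition `C₁, …, Cₙ` (pairwise disjoint
nonempty chains covering `P`, such that comparability of some pair of elements of `Cᵢ`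
and `Cⱼ` forces comparability of all such pairs) and a `C`-cut splitting each `Cᵢ` into
a nonempty lower part `Cᵢˡᵒʷ` and a nonempty upper part `Cᵢᵘᵖ`, such that comparable
elements `x ∈ Cᵢˡᵒʷ`, `y ∈ Cⱼᵘᵖ` always satisfy `x < y`. Let `U`, `Uˡᵒʷ`, `Uᵘᵖ` be the
Moebius matrices of `P`, `Pˡᵒʷ = ∪ᵢ Cᵢˡᵒʷ`, `Pᵘᵖ = ∪ᵢ Cᵢᵘᵖ` (with their induced
orders), let `cU`, `cUlow`, `cUup` denote their compressions along the respective
chains, and let `J = I + J₀` where `J₀` is the chain-comparability adjacency matrix.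
If `J` is invertible, then `^c(U) = ^c(Uˡᵒʷ) + ^c(Uᵘᵖ) − ^c(Uˡᵒʷ)·J·^c(Uᵘᵖ)`. -/
theorem moebius_cut_theorem_of_isUnit {K P : Type*} [Field K] [PartialOrder P] [Fintype P]
    {n : ℕ} (C lowC upC : Fin n → Finset P)
    (hChain : ∀ i, IsChain (· ≤ ·) (C i : Set P))
    (hCdisj : ∀ i j, i ≠ j → Disjoint (C i) (C j))
    (hCcover : ∀ x : P, ∃ i, x ∈ C i)
    (hCcomp : ∀ i j, i ≠ j → (∃ x ∈ C i, ∃ y ∈ C j, x ≤ y ∨ y ≤ x) →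
      ∀ x ∈ C i, ∀ y ∈ C j, x ≤ y ∨ y ≤ x)
    (hsplit : ∀ i, lowC i ∪ upC i = C i)
    (hludisj : ∀ i, Disjoint (lowC i) (upC i))
    (hlowne : ∀ i, (lowC i).Nonempty)
    (hupne : ∀ i, (upC i).Nonempty)
    (hcut : ∀ i j, ∀ x ∈ lowC i, ∀ y ∈ upC j, (x ≤ y ∨ y ≤ x) → x < y)
    (J : Matrix (Fin n) (Fin n) K)
    (hJ : J = 1 + Matrix.of fun i j : Fin n =>
      if i ≠ j ∧ ∀ x ∈ C i, ∀ y ∈ C j, x ≤ y ∨ y ≤ x then (1 : K) else 0)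
    (cU cUlow cUup : Matrix (Fin n) (Fin n) K)
    (hcU : cU = chainComp C (id : P → P) (moebiusM K P))
    (hcUlow : cUlow = chainComp lowC (Subtype.val : {x : P // ∃ i, x ∈ lowC i} → P)
      (moebiusM K {x : P // ∃ i, x ∈ lowC i}))
    (hcUup : cUup = chainComp upC (Subtype.val : {x : P // ∃ i, x ∈ upC i} → P)
      (moebiusM K {x : P // ∃ i, x ∈ upC i}))
    (hJunit : IsUnit J) :
    cU = cUlow + cUup - cUlow * J * cUup :=
  moebius_cut_theorem_of_isUnit_general C lowC upC hChain hCdisj hCcover hCcomp hsplit hcut J hJ cU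
    cUlow cUup hcU hcUlow hcUup
end

section
/- Let A be an n×n matrix over a field K and let π and σ be permutations of {1, …, n} such that A_π = A_σ (as matrices). Then the corresponding linear SDS maps coincide: F_{π_n}(A)·F_{π_{n−1}}(A)⋯F_{π_1}(A) = F_{σ_n}(A)·F_{σ_{n−1}}(A)⋯F_{σ_1}(A). -/
open Matrix

namespace SdsAux

variable {K : Type*} [Field K] {n : ℕ}

/-- Partial product of the first `k` local maps. -/
def partProd (A : Matrix (Fin n) (Fin n) K) (π : Equiv.Perm (Fin n)) (k : ℕ) :
    Matrix (Fin n) (Fin n) K :=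
  (((List.finRange n).take k).reverse.map fun j => sdsF A (π j)).prod

lemma partProd_zero (A : Matrix (Fin n) (Fin n) K) (π : Equiv.Perm (Fin n)) :
    partProd A π 0 = 1 := by simp [partProd]

lemma partProd_succ (A : Matrix (Fin n) (Fin n) K) (π : Equiv.Perm (Fin n))
    {k : ℕ} (hk : k < n) :
    partProd A π (k + 1) = sdsF A (π ⟨k, hk⟩) * partProd A π k := by
  have hlen : k < (List.finRange n).length := by simpa using hk
  have ht : (List.finRange n).take (k + 1) = (List.finRange n).take k ++ [⟨k, hk⟩] := by
    rw [List.take_succ, List.getElem?_eq_getElem hlen]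
    simp
  simp [partProd, ht]

lemma partProd_n (A : Matrix (Fin n) (Fin n) K) (π : Equiv.Perm (Fin n)) :
    partProd A π n = sdsMap A π := by
  have : (List.finRange n).take n = List.finRange n := by
    apply List.take_of_length_le; simp
  simp [partProd, sdsMap, this]

lemma partProd_succ_apply_ne (A : Matrix (Fin n) (Fin n) K) (π : Equiv.Perm (Fin n))
    {k : ℕ} (hk : k < n) {i : Fin n} (hi : i ≠ π ⟨k, hk⟩) (j : Fin n) :
    partProd A π (k + 1) i j = partProd A π k i j := by
  rw [partProd_succ A π hk, Matrix.mul_apply]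
  have : ∀ m, sdsF A (π ⟨k, hk⟩) i m = if i = m then 1 else 0 := by
    intro m; simp [sdsF, hi]
  simp [this]

lemma key (A : Matrix (Fin n) (Fin n) K) (π : Equiv.Perm (Fin n)) :
    ∀ k, k ≤ n → ∀ i j : Fin n,
      partProd A π k i j =
        if (π.symm i : ℕ) < k then
          (permPart A π * partProd A π k) i j + (A i j - permPart A π i j)
        else (1 : Matrix (Fin n) (Fin n) K) i j := by
  intro k
  induction k with
  | zero => intro _ i j; simp [partProd_zero]
  | succ k ih =>
    intro hk i j
    have hkn : k < n := hk
    by_cases hi : i = π ⟨k, hkn⟩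
    · have hsi : π.symm i = ⟨k, hkn⟩ := by rw [hi]; exact π.symm_apply_apply _
      rw [if_pos (show (π.symm i : ℕ) < k + 1 by rw [hsi]; exact Nat.lt_succ_self k)]
      have hF : ∀ m, sdsF A (π ⟨k, hkn⟩) i m = A i m := by
        intro m; simp [sdsF, hi]
      have hQij : partProd A π (k + 1) i j = ∑ m, A i m * partProd A π k m j := by
        rw [partProd_succ A π hkn, Matrix.mul_apply]
        exact Finset.sum_congr rfl fun m _ => by rw [hF]
      have hBQ : (permPart A π * partProd A π (k + 1)) i j
          = ∑ m, permPart A π i m * partProd A π k m j := by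
        rw [Matrix.mul_apply]
        refine Finset.sum_congr rfl fun m _ => ?_
        by_cases hm : π.symm m < π.symm i
        · have hmne : m ≠ π ⟨k, hkn⟩ := by
            intro hmeq
            rw [hmeq, π.symm_apply_apply, hsi] at hm
            exact lt_irrefl _ hm
          rw [partProd_succ_apply_ne A π hkn hmne]
        · simp [permPart, hm]
      have hdiff : ∀ m, A i m * partProd A π k m j - permPart A π i m * partProd A π k m j
          = (A i m - permPart A π i m) * (if m = j then 1 else 0) := by
        intro m
        by_cases hm : π.symm m < π.symm i
        · simp [permPart, hm, sub_mul]
        · have hmk : ¬ ((π.symm m : ℕ) < k) := by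
            intro hc
            exact hm (by rw [hsi]; exact hc)
          have h2 := ih (le_of_lt hkn) m j
          rw [if_neg hmk] at h2
          rw [← sub_mul, h2, Matrix.one_apply]
      have hsum : ∑ m, A i m * partProd A π k m j
          - ∑ m, permPart A π i m * partProd A π k m j
          = A i j - permPart A π i j := by
        rw [← Finset.sum_sub_distrib]
        calc ∑ m, (A i m * partProd A π k m j - permPart A π i m * partProd A π k m j)
            = ∑ m, (A i m - permPart A π i m) * (if m = j then 1 else 0) :=
              Finset.sum_congr rfl fun m _ => hdiff m
          _ = A i j - permPart A π i j := by
              rw [Finset.sum_eq_single j]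
              · simp
              · intro m _ hm; simp [hm]
              · intro hj; exact absurd (Finset.mem_univ j) hj
      rw [hQij, hBQ]
      linear_combination hsum
    · have hsi : π.symm i ≠ ⟨k, hkn⟩ := fun hc => hi (by rw [← π.apply_symm_apply i, hc])
      have hQP : ∀ j, partProd A π (k + 1) i j = partProd A π k i j :=
        partProd_succ_apply_ne A π hkn hi
      by_cases hlt : (π.symm i : ℕ) < k
      · rw [if_pos (Nat.lt_succ_of_lt hlt), hQP]
        have hBQ : (permPart A π * partProd A π (k + 1)) i j
            = (permPart A π * partProd A π k) i j := by
          rw [Matrix.mul_apply, Matrix.mul_apply]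
          refine Finset.sum_congr rfl fun m _ => ?_
          by_cases hm : π.symm m < π.symm i
          · have hmne : m ≠ π ⟨k, hkn⟩ := by
              intro hmeq
              rw [hmeq, π.symm_apply_apply] at hm
              have h3 : (k : ℕ) < (π.symm i : ℕ) := hm
              omega
            rw [partProd_succ_apply_ne A π hkn hmne]
          · simp [permPart, hm]
        rw [hBQ]
        have h4 := ih (le_of_lt hkn) i j
        rw [if_pos hlt] at h4
        exact h4
      · have hnlt : ¬ ((π.symm i : ℕ) < k + 1) := by
          intro hc
          have : (π.symm i : ℕ) = k := by omega
          exact hsi (Fin.ext this)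
        rw [if_neg hnlt, hQP]
        have h5 := ih (le_of_lt hkn) i j
        rw [if_neg hlt] at h5
        exact h5

lemma main_identity (A : Matrix (Fin n) (Fin n) K) (π : Equiv.Perm (Fin n)) :
    (1 - permPart A π) * sdsMap A π = A - permPart A π := by
  ext i j
  have hk := key A π n le_rfl i j
  rw [partProd_n, if_pos (π.symm i).isLt] at hk
  rw [Matrix.sub_mul, Matrix.one_mul, Matrix.sub_apply, Matrix.sub_apply, hk]
  ring

lemma isUnit_one_sub (A : Matrix (Fin n) (Fin n) K) (π : Equiv.Perm (Fin n)) :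
    IsUnit (1 - permPart A π) := by
  rw [Matrix.isUnit_iff_isUnit_det]
  have hdet : ((1 - permPart A π).submatrix π π).det = (1 - permPart A π).det :=
    Matrix.det_submatrix_equiv_self π _
  have htri : ((1 - permPart A π).submatrix π π).BlockTriangular OrderDual.toDual := by
    intro a b hab
    have hab' : a < b := hab
    simp only [Matrix.submatrix_apply, Matrix.sub_apply, Matrix.one_apply, permPart,
      Matrix.of_apply, Equiv.symm_apply_apply]
    rw [if_neg (π.injective.ne (ne_of_lt hab')), if_neg (not_lt_of_gt hab'), sub_zero]
  have hdl := Matrix.det_of_lowerTriangular _ htri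
  rw [hdet] at hdl
  have hd : ∀ i : Fin n, (1 - permPart A π).submatrix π π i i = 1 := by
    intro i; simp [Matrix.submatrix_apply, Matrix.sub_apply, Matrix.one_apply, permPart]
  have hprod : ∏ i, (1 - permPart A π).submatrix π π i i = 1 :=
    Finset.prod_eq_one fun i _ => hd i
  rw [hdl, hprod]
  exact isUnit_one

end SdsAux

/-- If two permutations `π` and `σ` induce the same matrix `A_π = A_σ`, then the
corresponding linear SDS maps coincide:
`F_{π_n}(A) ⋯ F_{π_1}(A) = F_{σ_n}(A) ⋯ F_{σ_1}(A)`. -/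
theorem sdsMap_eq_of_permPart_eq {K : Type*} [Field K] {n : ℕ} (hn : 0 < n)
    (A : Matrix (Fin n) (Fin n) K) (π σ : Equiv.Perm (Fin n))
    (h : permPart A π = permPart A σ) :
    sdsMap A π = sdsMap A σ := by
  have h1 := SdsAux.main_identity A π
  have h2 := SdsAux.main_identity A σ
  rw [← h] at h2
  exact (SdsAux.isUnit_one_sub A π).mul_left_cancel (h1.trans h2.symm)
end
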